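/- arXiv:1709.05891 — 6 statements merged into one kernel-verified Lean document; each statement's English description precedes it below -/
import Mathlib

section
/- Let g be a self-embedding of a tree T. Then either g fixes a vertex, or g fixes an edge (mapping its two endpoints to themselves as a set), or there exists a ray R in T with g(R) a proper subset of R. -/
open SimpleGraph

variable {V : Type*}

/-- `g` is a self-embedding of `G`: injective and adjacency-preserving. -/
def IsEmb (G : SimpleGraph V) (g : V → V) : Prop :=
  Function.Injective g ∧ ∀ u v : V, G.Adj u v → G.Adj (g u) (g v)

/-- A ray in `G`: a one-way infinite path. -/
structure GRay (G : SimpleGraph V) where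
  f : ℕ → V
  inj : Function.Injective f
  adj : ∀ n, G.Adj (f n) (f (n + 1))

/-- Two rays are equivalent (lie in the same end): for every vertex `v` they have
tails avoiding `v` lying in the same component of `G − v`. -/
def RayEquiv (G : SimpleGraph V) (R S : GRay G) : Prop :=
  ∀ v : V, ∃ m n : ℕ, (∀ i, m ≤ i → R.f i ≠ v) ∧ (∀ j, n ≤ j → S.f j ≠ v) ∧
    ∃ w : G.Walk (R.f m) (S.f n), v ∉ w.support

/-- `g` fixes the end represented by the ray `R`: the image ray is equivalent to `R`. -/
def FixesEnd (G : SimpleGraph V) (g : V → V) (R : GRay G) : Prop :=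
  ∃ S : GRay G, (∀ n, S.f n = g (R.f n)) ∧ RayEquiv G S R

def FixesVertex (g : V → V) : Prop := ∃ v, g v = v

/-- `g` fixes an edge setwise (possibly swapping its endpoints). -/
def FixesEdge (G : SimpleGraph V) (g : V → V) : Prop :=
  ∃ u v : V, G.Adj u v ∧ ((g u = u ∧ g v = v) ∨ (g u = v ∧ g v = u))

/-- `g` fixes setwise a non-empty finite subtree of `G`. -/
def FixesFiniteSubtree (G : SimpleGraph V) (g : V → V) : Prop :=
  ∃ S : Set V, S.Nonempty ∧ S.Finite ∧ (G.induce S).Connected ∧ g '' S = S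

/-- `R` is a ray with `g(R) ⊆ R`; for non-elliptic `g` its end is the direction `g⁺`. -/
def DirectionRay (G : SimpleGraph V) (g : V → V) (R : GRay G) : Prop :=
  ∀ n, ∃ m, g (R.f n) = R.f m

/-- `w` lies in the component of `G − x` containing the end of `R`. -/
def InComp (G : SimpleGraph V) (x : V) (R : GRay G) (w : V) : Prop :=
  ∃ m, (∀ i, m ≤ i → R.f i ≠ x) ∧ ∃ p : G.Walk w (R.f m), x ∉ p.support

/-- A sequence of vertices converges to the end represented by `R`. -/
def ConvergesTo (G : SimpleGraph V) (x : ℕ → V) (R : GRay G) : Prop :=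
  ∀ v : V, ∃ N : ℕ, ∀ n, N ≤ n → InComp G v R (x n)

/-- `M` is a submonoid of `Emb(G)`. -/
def IsEmbMonoid (G : SimpleGraph V) (M : Set (V → V)) : Prop :=
  (∀ g ∈ M, IsEmb G g) ∧ (id ∈ M) ∧ ∀ g ∈ M, ∀ h ∈ M, (g ∘ h) ∈ M

/-- The end of `R` is an accumulation point of the orbit of `v0` under `M`:
every basic neighbourhood of the end of `R` meets the orbit. -/
def InLimitSet (G : SimpleGraph V) (M : Set (V → V)) (v0 : V) (R : GRay G) : Prop :=
  ∀ x : V, ∃ g ∈ M, InComp G x R (g v0)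

section AuxStmt1

variable {G : SimpleGraph V}

/-- Distances along a walk are bounded by index differences. -/
lemma aux_dist_getVert_le (hc : G.Connected) {a b : V} (p : G.Walk a b) :
    ∀ i j : ℕ, i ≤ j → G.dist (p.getVert i) (p.getVert j) ≤ j - i := by
  induction p with
  | nil =>
    intro i j _
    rw [Walk.getVert_of_length_le _ (by simp), Walk.getVert_of_length_le _ (by simp)]
    simp [SimpleGraph.dist_self]
  | @cons u v w h q ih =>
    intro i j hij
    match i, j with
    | 0, 0 => simp [SimpleGraph.dist_self]
    | 0, (j+1) =>
      rw [Walk.getVert_zero, Walk.getVert_cons_succ]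
      have h1 : G.dist u (q.getVert 0) = 1 := by
        rw [Walk.getVert_zero]; exact SimpleGraph.dist_eq_one_iff_adj.2 h
      have h2 : G.dist (q.getVert 0) (q.getVert j) ≤ j - 0 := ih 0 j (Nat.zero_le _)
      have h3 := hc.dist_triangle (u := u) (v := q.getVert 0) (w := q.getVert j)
      omega
    | (i+1), (j+1) =>
      rw [Walk.getVert_cons_succ, Walk.getVert_cons_succ]
      have := ih i j (by omega)
      omega

/-- In a tree, every path realizes the distance. -/
lemma aux_path_length_eq_dist (hT : G.IsTree) {a b : V} {p : G.Walk a b}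
    (hp : p.IsPath) : p.length = G.dist a b := by
  obtain ⟨q, hq, hql⟩ := hT.isConnected.exists_path_of_dist a b
  have := hT.IsAcyclic.path_unique ⟨p, hp⟩ ⟨q, hq⟩
  have hval : p = q := congrArg Subtype.val this
  rw [hval, hql]

/-- In a tree, adjacent vertices have different distances to any vertex. -/
lemma aux_adj_dist_ne (hT : G.IsTree) {a x y : V} (hxy : G.Adj x y) :
    G.dist a x ≠ G.dist a y := by
  classical
  intro h
  have hc := hT.isConnected
  set k := G.dist a y with hky
  rcases Nat.eq_zero_or_pos k with hk0 | hkpos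
  · have hax : a = x := (hc.dist_eq_zero_iff).1 (by omega)
    have hay : a = y := (hc.dist_eq_zero_iff).1 (by omega)
    exact hxy.ne (hax ▸ hay ▸ rfl)
  obtain ⟨q, hq, hql⟩ := hc.exists_path_of_dist a y
  by_cases hx : x ∈ q.support
  · have h1 : G.dist a x ≤ (q.takeUntil x hx).length := SimpleGraph.dist_le _
    have h2 : G.dist x y ≤ (q.dropUntil x hx).length := SimpleGraph.dist_le _
    have h3 : (q.takeUntil x hx).length + (q.dropUntil x hx).length = k := by
      have := congrArg Walk.length (q.take_spec hx)
      rw [Walk.length_append] at this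
      omega
    have h4 : G.dist x y = 1 := SimpleGraph.dist_eq_one_iff_adj.2 hxy
    omega
  · have hx' : x ∉ q.reverse.support := by rwa [Walk.support_reverse, List.mem_reverse]
    have hp2 : ((Walk.cons hxy q.reverse).reverse : G.Walk a x).IsPath :=
      (hq.reverse.cons hx').reverse
    have hl2 : ((Walk.cons hxy q.reverse).reverse : G.Walk a x).length = k + 1 := by
      rw [Walk.length_reverse, Walk.length_cons, Walk.length_reverse]; omega
    have := aux_path_length_eq_dist hT hp2
    omega

/-- In a tree, the neighbour of `z` strictly closer to `a` is unique. -/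
lemma aux_parent_unique (hT : G.IsTree) {a z x y : V} (hzx : G.Adj z x) (hzy : G.Adj z y)
    (hx : G.dist a x + 1 = G.dist a z) (hy : G.dist a y + 1 = G.dist a z) : x = y := by
  classical
  have hc := hT.isConnected
  obtain ⟨p, hp, hpl⟩ := hc.exists_path_of_dist a x
  obtain ⟨q, hq, hql⟩ := hc.exists_path_of_dist a y
  have hzp : z ∉ p.support := by
    intro hz
    have h1 : G.dist a z ≤ (p.takeUntil z hz).length := SimpleGraph.dist_le _
    have h2 : (p.takeUntil z hz).length ≤ p.length := Walk.length_takeUntil_le _ hz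
    omega
  have hzq : z ∉ q.support := by
    intro hz
    have h1 : G.dist a z ≤ (q.takeUntil z hz).length := SimpleGraph.dist_le _
    have h2 : (q.takeUntil z hz).length ≤ q.length := Walk.length_takeUntil_le _ hz
    omega
  have hzp' : z ∉ p.reverse.support := by rwa [Walk.support_reverse, List.mem_reverse]
  have hzq' : z ∉ q.reverse.support := by rwa [Walk.support_reverse, List.mem_reverse]
  have hp2 : (Walk.cons hzx p.reverse : G.Walk z a).IsPath := hp.reverse.cons hzp'
  have hq2 : (Walk.cons hzy q.reverse : G.Walk z a).IsPath := hq.reverse.cons hzq'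
  have heq := hT.IsAcyclic.path_unique ⟨Walk.cons hzx p.reverse, hp2⟩
    ⟨Walk.cons hzy q.reverse, hq2⟩
  have hval : (Walk.cons hzx p.reverse : G.Walk z a) = Walk.cons hzy q.reverse :=
    congrArg Subtype.val heq
  have := congrArg (fun w : G.Walk z a => w.getVert 1) hval
  simpa [Walk.getVert_cons_succ, Walk.getVert_zero] using this

end AuxStmt1

theorem stmt1 (G : SimpleGraph V) (hT : G.IsTree) (g : V → V) (hg : IsEmb G g) :
    FixesVertex g ∨ FixesEdge G g ∨
      ∃ R : GRay G, (∀ n, ∃ m, g (R.f n) = R.f m) ∧ ∃ m, ∀ n, g (R.f n) ≠ R.f m := by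
  classical
  by_cases hv : FixesVertex g
  · exact Or.inl hv
  by_cases he : FixesEdge G g
  · exact Or.inr (Or.inl he)
  refine Or.inr (Or.inr ?_)
  have hc := hT.isConnected
  have hne : Nonempty V := hc.nonempty
  set S : Set ℕ := Set.range (fun v => G.dist v (g v)) with hS
  have hSne : S.Nonempty := ⟨G.dist hne.some (g hne.some), ⟨hne.some, rfl⟩⟩
  set D := sInf S with hDdef
  obtain ⟨v₀, hv₀⟩ : ∃ v, G.dist v (g v) = D := Nat.sInf_mem hSne
  have hmin : ∀ x, D ≤ G.dist x (g x) := fun x => Nat.sInf_le ⟨x, rfl⟩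
  have hD1 : 1 ≤ D := by
    rcases Nat.eq_zero_or_pos D with hD0 | h
    · exact absurd ⟨v₀, ((hc.dist_eq_zero_iff).1 (by omega)).symm⟩ hv
    · exact h
  obtain ⟨P, hP, hPl⟩ := hc.exists_path_of_dist v₀ (g v₀)
  rw [hv₀] at hPl
  have hPD : P.getVert D = g v₀ := by rw [← hPl]; exact P.getVert_length
  have hP0 : P.getVert 0 = v₀ := P.getVert_zero
  -- the ray function
  set f : ℕ → V := fun n => g^[n / D] (P.getVert (n % D)) with hfdef
  -- iterates are embeddings
  have hgq : ∀ q : ℕ, Function.Injective (g^[q]) ∧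
      ∀ u v : V, G.Adj u v → G.Adj (g^[q] u) (g^[q] v) := by
    intro q
    refine ⟨hg.1.iterate q, ?_⟩
    induction q with
    | zero => intro u v h; simpa using h
    | succ q ih =>
      intro u v h
      rw [Function.iterate_succ_apply', Function.iterate_succ_apply']
      exact hg.2 _ _ (ih u v h)
  -- block formula
  have hf_eq : ∀ q r : ℕ, r ≤ D → f (q * D + r) = g^[q] (P.getVert r) := by
    intro q r hr
    rcases lt_or_eq_of_le hr with hrD | hrD
    · have hdiv : (q * D + r) / D = q := by
        rw [Nat.add_comm, Nat.add_mul_div_right _ _ (by omega : 0 < D),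
          Nat.div_eq_of_lt hrD]; omega
      have hmod : (q * D + r) % D = r := by
        rw [Nat.add_comm, Nat.add_mul_mod_self_right, Nat.mod_eq_of_lt hrD]
      simp only [hfdef, hdiv, hmod]
    · subst hrD
      have h1 : q * D + D = (q + 1) * D := by ring
      have hdiv : (q * D + D) / D = q + 1 := by
        rw [h1, Nat.mul_div_cancel _ (by omega : 0 < D)]
      have hmod : (q * D + D) % D = 0 := by
        rw [h1, Nat.mul_mod_left]
      simp only [hfdef, hdiv, hmod]
      rw [Function.iterate_succ_apply, hP0, hPD]
  have hfn : ∀ n : ℕ, f n = g^[n / D] (P.getVert (n % D)) := fun n => rfl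
  have hdecomp : ∀ n : ℕ, (n / D) * D + n % D = n := fun n => by
    rw [Nat.mul_comm]; exact Nat.div_add_mod n D
  -- distances within the geodesic P
  have hPdist : ∀ i j : ℕ, i ≤ j → j ≤ D → G.dist (P.getVert i) (P.getVert j) = j - i := by
    intro i j hij hjD
    have hub := aux_dist_getVert_le hc P i j hij
    have h1 := aux_dist_getVert_le hc P 0 i (Nat.zero_le _)
    rw [hP0] at h1
    have h2 := aux_dist_getVert_le hc P j D hjD
    rw [hPD] at h2
    have h3 := hc.dist_triangle (u := v₀) (v := P.getVert i) (w := g v₀)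
    have h4 := hc.dist_triangle (u := P.getVert i) (v := P.getVert j) (w := g v₀)
    omega
  -- the shift property
  have hshift : ∀ n : ℕ, f (n + D) = g (f n) := by
    intro n
    have h2 := hf_eq (n / D + 1) (n % D) (le_of_lt (Nat.mod_lt n (by omega)))
    have e : (n / D + 1) * D + n % D = n + D := by
      have hd := hdecomp n
      have h3 : (n / D + 1) * D = (n / D) * D + D := by ring
      omega
    rw [e] at h2
    rw [h2, hfn n, ← Function.iterate_succ_apply' g, Function.iterate_succ_apply]
  -- adjacency
  have hadj : ∀ n : ℕ, G.Adj (f n) (f (n + 1)) := by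
    intro n
    have hr : n % D < D := Nat.mod_lt n (by omega)
    have h1 : f n = g^[n / D] (P.getVert (n % D)) := hfn n
    have h2 := hf_eq (n / D) (n % D + 1) (by omega)
    have e : (n / D) * D + (n % D + 1) = n + 1 := by have hd := hdecomp n; omega
    rw [e] at h2
    rw [h1, h2]
    exact (hgq (n / D)).2 _ _ (P.adj_getVert_succ (by omega))
  -- no two-step return
  have hne2 : ∀ n : ℕ, f n ≠ f (n + 2) := by
    intro n hEq
    have hr : n % D < D := Nat.mod_lt n (by omega)
    set q := n / D with hq
    set r := n % D with hrdef
    have h1 : f n = g^[q] (P.getVert r) := hfn n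
    by_cases hcase : r + 2 ≤ D
    · have h2 := hf_eq q (r + 2) hcase
      have e : q * D + (r + 2) = n + 2 := by
        have hd := hdecomp n; rw [← hq, ← hrdef] at hd; omega
      rw [e] at h2
      rw [h1, h2] at hEq
      have := (hgq q).1 hEq
      have hd := hPdist r (r + 2) (by omega) hcase
      rw [this, SimpleGraph.dist_self] at hd
      omega
    · -- r = D - 1
      have hrD : r + 1 = D := by omega
      have h2 := hf_eq (q + 1) 1 (by omega)
      have e : (q + 1) * D + 1 = n + 2 := by
        have hd := hdecomp n; rw [← hq, ← hrdef] at hd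
        have h3 : (q + 1) * D = q * D + D := by ring
        omega
      rw [e, Function.iterate_succ_apply] at h2
      rw [h1, h2] at hEq
      have hkey : P.getVert r = g (P.getVert 1) := (hgq q).1 hEq
      by_cases hD2 : 2 ≤ D
      · have hd : G.dist (P.getVert 1) (P.getVert r) = r - 1 :=
          hPdist 1 r (by omega) (by omega)
        rw [hkey] at hd
        have := hmin (P.getVert 1)
        omega
      · -- D = 1, so r = 0 : edge flip
        have hDone : D = 1 := by omega
        have hr0 : r = 0 := by omega
        have hP1 : P.getVert 1 = g v₀ := by
          have h := hPD; rw [hDone] at h; exact h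
        rw [hr0, hP0, hP1] at hkey
        have hadj01 : G.Adj v₀ (g v₀) := SimpleGraph.dist_eq_one_iff_adj.1 (by rw [hv₀, hDone])
        exact he ⟨v₀, g v₀, hadj01, Or.inr ⟨rfl, hkey.symm⟩⟩
  -- distances from v₀ grow linearly
  have hf0 : f 0 = v₀ := by
    rw [hfn 0, Nat.zero_div, Nat.zero_mod, hP0]; simp
  have hdist : ∀ n : ℕ, G.dist v₀ (f n) = n ∧ G.dist v₀ (f (n + 1)) = n + 1 := by
    intro n
    induction n with
    | zero =>
      constructor
      · rw [hf0, SimpleGraph.dist_self]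
      · have := hadj 0
        rw [hf0] at this
        exact SimpleGraph.dist_eq_one_iff_adj.2 this
    | succ n ih =>
      refine ⟨ih.2, ?_⟩
      show G.dist v₀ (f (n + 2)) = n + 2
      have hA := hadj (n + 1)
      have hNE : G.dist v₀ (f (n + 1)) ≠ G.dist v₀ (f (n + 2)) := aux_adj_dist_ne hT hA
      have hd1 : G.dist (f (n + 1)) (f (n + 2)) = 1 := SimpleGraph.dist_eq_one_iff_adj.2 hA
      have ht1 := hc.dist_triangle (u := v₀) (v := f (n + 1)) (w := f (n + 2))
      have ht2 := hc.dist_triangle (u := v₀) (v := f (n + 2)) (w := f (n + 1))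
      have hd1' : G.dist (f (n + 2)) (f (n + 1)) = 1 := by
        rw [SimpleGraph.dist_comm]; exact hd1
      rcases Nat.lt_or_ge (G.dist v₀ (f (n + 2))) (n + 2) with hlt | hge
      · exfalso
        have hknd : G.dist v₀ (f (n + 2)) = n := by omega
        have := aux_parent_unique hT (hadj n).symm hA (a := v₀)
          (by rw [ih.1, ih.2]) (by rw [hknd, ih.2])
        exact hne2 n this
      · omega
  have hinj : Function.Injective f := by
    intro m n hmn
    have h1 := (hdist m).1
    have h2 := (hdist n).1
    rw [hmn] at h1
    omega
  refine ⟨⟨f, hinj, hadj⟩, ?_, 0, ?_⟩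
  · intro n; exact ⟨n + D, (hshift n).symm⟩
  · intro n hEq
    simp only at hEq
    rw [← hshift n] at hEq
    have := hinj hEq
    omega
end

section
/- A self-embedding of a tree is elliptic if and only if it fixes either a vertex or an edge. -/
open SimpleGraph

variable {V : Type*}

universe u

section Aux
variable {W : Type u} {T : SimpleGraph W}

/-- A leaf: at most one neighbour. -/
def TLeaf (T : SimpleGraph W) (v : W) : Prop := (T.neighborSet v).Subsingleton

lemma reachable_induce_of_support {S : Set W} :
    ∀ {u w : W} (p : T.Walk u w), (∀ x ∈ p.support, x ∈ S) →
      ∀ (hu : u ∈ S) (hw : w ∈ S), (T.induce S).Reachable ⟨u, hu⟩ ⟨w, hw⟩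
  | _, _, SimpleGraph.Walk.nil, _, hu, hw => Reachable.refl _
  | _, _, @SimpleGraph.Walk.cons _ _ u x w h q, hs, hu, hw => by
    have hx : x ∈ S := hs x (by simp)
    have hadj : (T.induce S).Adj ⟨u, hu⟩ ⟨x, hx⟩ := h
    exact hadj.reachable.trans
      (reachable_induce_of_support q (fun x hxx => hs x (by simp [hxx])) hx hw)

lemma not_leaf_of_internal [DecidableEq W] {u w x : W} {p : T.Walk u w} (hp : p.IsPath)
    (hx : x ∈ p.support) (hxu : x ≠ u) (hxw : x ≠ w) : ¬ TLeaf T x := by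
  intro hleaf
  have hn1 : ¬ (p.takeUntil x hx).reverse.Nil := Walk.not_nil_of_ne hxu
  have hn2 : ¬ (p.dropUntil x hx).Nil := Walk.not_nil_of_ne hxw
  rw [Walk.not_nil_iff] at hn1 hn2
  obtain ⟨a, ha, r1, hr1⟩ := hn1
  obtain ⟨b, hb, r2, hr2⟩ := hn2
  -- a ∈ (takeUntil).support
  have hamem : a ∈ (p.takeUntil x hx).support := by
    have : a ∈ (p.takeUntil x hx).reverse.support := by rw [hr1]; simp
    simpa [Walk.support_reverse] using this
  have hbmem : b ∈ (p.dropUntil x hx).support.tail := by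
    rw [hr2]; simp [Walk.support_cons]
  have hnd := hp.support_nodup
  rw [← Walk.take_spec p hx, Walk.support_append] at hnd
  have hdisj := List.disjoint_of_nodup_append hnd
  have hab : a = b := hleaf ha hb
  exact hdisj hamem (hab ▸ hbmem)

lemma neighborSet_image [Finite W] {f : W → W} (hinj : Function.Injective f)
    (hadj : ∀ a b, T.Adj a b → T.Adj (f a) (f b)) (v : W) :
    T.neighborSet (f v) = f '' T.neighborSet v := by
  have hmaps : Set.MapsTo (Sym2.map f) T.edgeSet T.edgeSet := by
    intro e he
    induction e with
    | _ a b => rw [Sym2.map_pair_eq]; exact hadj a b he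
  have hbij := (T.edgeSet.toFinite.injOn_iff_bijOn_of_mapsTo hmaps).mp
    (Sym2.map.injective hinj).injOn
  ext z
  constructor
  · intro hz
    have hz' : s(f v, z) ∈ T.edgeSet := hz
    obtain ⟨e, he, hee⟩ := hbij.surjOn hz'
    induction e with
    | _ a b =>
      rw [Sym2.map_pair_eq, Sym2.eq_iff] at hee
      rcases hee with ⟨h1, h2⟩ | ⟨h1, h2⟩
      · exact ⟨b, (hinj h1) ▸ he, h2⟩
      · exact ⟨a, ((hinj h2) ▸ (he : T.Adj a b)).symm, h1⟩
  · rintro ⟨a, ha, rfl⟩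
    exact hadj v a ha

lemma tleaf_map_iff [Finite W] {f : W → W} (hinj : Function.Injective f)
    (hadj : ∀ a b, T.Adj a b → T.Adj (f a) (f b)) (v : W) :
    TLeaf T (f v) ↔ TLeaf T v := by
  unfold TLeaf
  rw [neighborSet_image hinj hadj]
  constructor
  · intro h a ha b hb
    exact hinj (h (Set.mem_image_of_mem f ha) (Set.mem_image_of_mem f hb))
  · exact fun h => h.image f

lemma exists_tleaf [Fintype W] [DecidableEq W] [DecidableRel T.Adj]
    (hT : T.IsTree) (h2 : 2 ≤ Fintype.card W) : ∃ v, TLeaf T v := by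
  by_contra hno
  push_neg at hno
  have hdeg : ∀ v, 2 ≤ T.degree v := by
    intro v
    have hv := hno v
    rw [TLeaf, Set.not_subsingleton_iff] at hv
    obtain ⟨a, ha, b, hb, hab⟩ := hv
    have hsub : ({a, b} : Finset W) ⊆ T.neighborFinset v := by
      intro c hc
      rcases Finset.mem_insert.mp hc with rfl | hc
      · exact (T.mem_neighborFinset v c).mpr ha
      · exact (T.mem_neighborFinset v c).mpr (Finset.mem_singleton.mp hc ▸ hb)
    calc 2 = ({a, b} : Finset W).card := (Finset.card_pair hab).symm
      _ ≤ _ := Finset.card_le_card hsub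
  have hsum := T.sum_degrees_eq_twice_card_edges
  have hcard := hT.card_edgeFinset
  have hge : 2 * Fintype.card W ≤ ∑ v, T.degree v := by
    calc 2 * Fintype.card W = ∑ _v : W, 2 := by
          rw [Finset.sum_const, Finset.card_univ, smul_eq_mul, mul_comm]
      _ ≤ ∑ v, T.degree v := Finset.sum_le_sum fun v _ => hdeg v
  omega

lemma exists_internal [Fintype W] (hT : T.IsTree) (h3 : 3 ≤ Fintype.card W) :
    ∃ v, ¬ TLeaf T v := by
  classical
  by_contra hall
  push_neg at hall
  by_cases hadj : ∀ u v : W, u ≠ v → T.Adj u v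
  · obtain ⟨u, v, huv⟩ := Fintype.exists_pair_of_one_lt_card (show 1 < Fintype.card W by omega)
    have : ∃ z : W, z ≠ u ∧ z ≠ v := by
      by_contra hz
      push_neg at hz
      have hsub : (Finset.univ : Finset W) ⊆ {u, v} := by
        intro z _
        rcases Classical.em (z = u) with rfl | h
        · exact Finset.mem_insert_self _ _
        · rw [hz z h]; exact Finset.mem_insert_of_mem (Finset.mem_singleton_self _)
      have := Finset.card_le_card hsub
      have h2 : ({u, v} : Finset W).card ≤ 2 := Finset.card_insert_le _ _ |>.trans (by simp)
      rw [Finset.card_univ] at this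
      omega
    obtain ⟨z, hzu, hzv⟩ := this
    exact hzu (hall v (hadj v u (Ne.symm huv)) (hadj v z fun h => hzv h.symm)).symm
  · push_neg at hadj
    obtain ⟨u, v, huv, hnadj⟩ := hadj
    obtain ⟨q⟩ := hT.isConnected u v
    obtain ⟨p, hp⟩ := q.toPath
    match p, hp with
    | Walk.nil, _ => exact huv rfl
    | Walk.cons h Walk.nil, _ => exact hnadj h
    | @Walk.cons _ _ _ x _ h (Walk.cons h' r), hp =>
      have hnd := hp.support_nodup
      rw [Walk.support_cons, Walk.support_cons] at hnd
      have huy : u ∉ r.support := by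
        intro hmem
        exact (List.nodup_cons.mp hnd).1 (List.mem_cons_of_mem _ hmem)
      have : u = _ := hall x (h.symm) h'
      exact huy (this ▸ r.start_mem_support)

lemma connected_nonleaf [DecidableEq W] (hT : T.IsTree) (hne : ∃ v, ¬TLeaf T v) :
    (T.induce {v | ¬ TLeaf T v}).Connected := by
  rw [connected_iff]
  refine ⟨?_, ⟨⟨hne.choose, hne.choose_spec⟩⟩⟩
  rintro ⟨u, hu⟩ ⟨w, hw⟩
  obtain ⟨q⟩ := hT.isConnected u w
  refine reachable_induce_of_support (q.toPath : T.Walk u w) ?_ hu hw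
  intro x hx
  rcases Classical.em (x = u) with rfl | hxu
  · exact hu
  rcases Classical.em (x = w) with rfl | hxw
  · exact hw
  exact not_leaf_of_internal q.toPath.isPath hx hxu hxw

lemma isAcyclic_induce {V : Type*} {G : SimpleGraph V} (h : G.IsAcyclic) (S : Set V) :
    (G.induce S).IsAcyclic := by
  intro v c hc
  exact h (c.map (SimpleGraph.Embedding.induce S).toHom) (hc.map Subtype.val_injective)

lemma tree_fix : ∀ (n : ℕ) {W : Type u} [Fintype W] (T : SimpleGraph W),
    Fintype.card W ≤ n → T.IsTree → ∀ f : W → W, Function.Injective f →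
    (∀ a b, T.Adj a b → T.Adj (f a) (f b)) →
    (∃ v, f v = v) ∨ ∃ u v, T.Adj u v ∧ f u = v ∧ f v = u := by
  intro n
  induction n with
  | zero =>
    intro W _ T hcard hT f hinj hadj
    have : Nonempty W := hT.isConnected.nonempty
    rw [Nat.le_zero, Fintype.card_eq_zero_iff] at hcard
    exact (hcard.false this.some).elim
  | succ n ih =>
    intro W _ T hcard hT f hinj hadj
    classical
    have hne : Nonempty W := hT.isConnected.nonempty
    rcases Classical.em (Fintype.card W ≤ 1) with h1 | h1
    · -- subsingleton
      have : Subsingleton W := Fintype.card_le_one_iff_subsingleton.mp h1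
      exact Or.inl ⟨hne.some, Subsingleton.elim _ _⟩
    rcases Classical.em (Fintype.card W ≤ 2) with h2 | h2
    · -- exactly two vertices
      obtain ⟨u, v, huv⟩ := Fintype.exists_pair_of_one_lt_card (show 1 < Fintype.card W by omega)
      have hall : ∀ a : W, a = u ∨ a = v := by
        intro a
        by_contra ha
        push_neg at ha
        have hsub : ({u, v, a} : Finset W).card ≤ Fintype.card W :=
          Finset.card_le_univ _
        rw [Finset.card_insert_of_notMem (by simp [huv, Ne.symm ha.1]),
          Finset.card_insert_of_notMem (by simp [Ne.symm ha.2]),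
          Finset.card_singleton] at hsub
        omega
      -- u and v are adjacent
      have hadjuv : T.Adj u v := by
        obtain ⟨q⟩ := hT.isConnected u v
        obtain ⟨p, hp⟩ := q.toPath
        match p, hp with
        | Walk.nil, _ => exact (huv rfl).elim
        | @Walk.cons _ _ _ x _ h r, hp =>
          rcases hall x with rfl | rfl
          · exact (h.ne rfl).elim
          · exact h
      rcases hall (f u) with hfu | hfu
      · rcases hall (f v) with hfv | hfv
        · exact (huv (hinj (hfu.trans hfv.symm))).elim
        · exact Or.inl ⟨v, hfv⟩
      · rcases hall (f v) with hfv | hfv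
        · exact Or.inr ⟨u, v, hadjuv, hfu, hfv⟩
        · exact (huv (hinj (hfu.trans hfv.symm))).elim
    · -- at least three vertices
      have h3 : 3 ≤ Fintype.card W := by omega
      obtain ⟨l, hl⟩ := exists_tleaf hT (by omega)
      have hint := exists_internal hT h3
      set S : Set W := {v | ¬ TLeaf T v} with hS
      have hT' : (T.induce S).IsTree :=
        ⟨connected_nonleaf hT hint, isAcyclic_induce hT.IsAcyclic S⟩
      have hsurj : Function.Surjective f := (Finite.injective_iff_surjective).mp hinj
      have hmem : ∀ x : W, x ∈ S → f x ∈ S := by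
        intro x hx
        simpa [hS, Set.mem_setOf_eq, tleaf_map_iff hinj hadj] using hx
      set f' : S → S := fun x => ⟨f x, hmem x x.2⟩ with hf'
      have hinj' : Function.Injective f' := by
        intro a b hab
        exact Subtype.ext (hinj (congrArg Subtype.val hab))
      have hadj' : ∀ a b : S, (T.induce S).Adj a b → (T.induce S).Adj (f' a) (f' b) := by
        intro a b hab
        exact hadj _ _ hab
      have hcard' : Fintype.card S ≤ n := by
        have : Fintype.card S < Fintype.card W := Fintype.card_subtype_lt (x := l) (by simpa [hS] using hl)
        omega
      rcases ih (T.induce S) hcard' hT' f' hinj' hadj' with ⟨⟨v, hv⟩, hfv⟩ | hedge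
      · exact Or.inl ⟨v, congrArg Subtype.val hfv⟩
      · obtain ⟨⟨a, ha⟩, ⟨b, hb⟩, hab, hfa, hfb⟩ := hedge
        exact Or.inr ⟨a, b, hab, congrArg Subtype.val hfa, congrArg Subtype.val hfb⟩

end Aux

theorem stmt2 (G : SimpleGraph V) (hT : G.IsTree) (g : V → V) (hg : IsEmb G g) :
    FixesFiniteSubtree G g ↔ (FixesVertex g ∨ FixesEdge G g) := by
  constructor
  · rintro ⟨S, hne, hfin, hconn, himg⟩
    classical
    haveI := hfin.fintype
    have hmaps : ∀ x ∈ S, g x ∈ S := fun x hx => himg ▸ Set.mem_image_of_mem g hx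
    set f : S → S := fun x => ⟨g x, hmaps x x.2⟩ with hf
    have hinj : Function.Injective f := fun a b h =>
      Subtype.ext (hg.1 (congrArg Subtype.val h))
    have hadj : ∀ a b : S, (G.induce S).Adj a b → (G.induce S).Adj (f a) (f b) :=
      fun a b h => hg.2 _ _ h
    have hT' : (G.induce S).IsTree := ⟨hconn, isAcyclic_induce hT.IsAcyclic S⟩
    rcases tree_fix (Fintype.card S) (G.induce S) le_rfl hT' f hinj hadj with
      ⟨⟨v, hv⟩, hfv⟩ | ⟨⟨u, hu⟩, ⟨v, hv⟩, hadj', hfu, hfv⟩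
    · exact Or.inl ⟨v, congrArg Subtype.val hfv⟩
    · exact Or.inr ⟨u, v, hadj',
        Or.inr ⟨congrArg Subtype.val hfu, congrArg Subtype.val hfv⟩⟩
  · rintro (⟨v, hv⟩ | ⟨u, v, huv, hcase⟩)
    · refine ⟨{v}, ⟨v, rfl⟩, Set.finite_singleton v, ?_, by simp [hv]⟩
      rw [connected_iff]
      refine ⟨?_, ⟨⟨v, rfl⟩⟩⟩
      rintro ⟨a, ha⟩ ⟨b, hb⟩
      have : a = b := by
        rw [Set.mem_singleton_iff] at ha hb
        rw [ha, hb]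
      subst this
      rfl
    · refine ⟨{u, v}, ⟨u, by simp⟩, (Set.finite_singleton v).insert u, ?_, ?_⟩
      · rw [connected_iff]
        refine ⟨?_, ⟨⟨u, by simp⟩⟩⟩
        have hadjI : (G.induce {u, v}).Adj ⟨u, by simp⟩ ⟨v, by simp⟩ := huv
        rintro ⟨a, ha⟩ ⟨b, hb⟩
        rcases ha with rfl | ha <;> rcases hb with rfl | hb
        · rfl
        · rw [Set.mem_singleton_iff] at hb; subst hb; exact hadjI.reachable
        · rw [Set.mem_singleton_iff] at ha; subst ha; exact hadjI.symm.reachable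
        · rw [Set.mem_singleton_iff] at ha hb; subst ha; subst hb; rfl
      · rcases hcase with ⟨h1, h2⟩ | ⟨h1, h2⟩ <;>
          simp [Set.image_insert_eq, h1, h2, Set.pair_comm]
end

section
/- Every self-embedding of a tree is either elliptic, hyperbolic, or parabolic, and these three cases are mutually exclusive. -/
open SimpleGraph

variable {V : Type*}

/-- A self-embedding is elliptic if it fixes a non-empty finite subtree. -/
def Elliptic (G : SimpleGraph V) (g : V → V) : Prop := FixesFiniteSubtree G g

/-- `g` is hyperbolic: not elliptic and it fixes exactly two ends. -/
def Hyperbolic (G : SimpleGraph V) (g : V → V) : Prop :=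
  ¬ Elliptic G g ∧ ∃ R1 R2 : GRay G, ¬ RayEquiv G R1 R2 ∧
    FixesEnd G g R1 ∧ FixesEnd G g R2 ∧
    ∀ S : GRay G, FixesEnd G g S → RayEquiv G S R1 ∨ RayEquiv G S R2

/-- `g` is parabolic: not elliptic and it fixes exactly one end. -/
def Parabolic (G : SimpleGraph V) (g : V → V) : Prop :=
  ¬ Elliptic G g ∧ ∃ R : GRay G, FixesEnd G g R ∧
    ∀ S : GRay G, FixesEnd G g S → RayEquiv G S R

/-!
A non-elliptic self-embedding `g` has no fixed vertex and flips no edge. Pick `v` minimising the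
displacement `ℓ = d(v, g v)` and let `P` be the geodesic from `v` to `g v`; then `P, gP, g²P, …`
concatenate to a ray, since backtracking at a junction would either flip an edge (`ℓ = 1`) or
produce a vertex displaced by less than `ℓ`. The ray is translated by `g`, so its end is fixed.

Three pairwise inequivalent ends `A, B, C` of a tree have a centre: a vertex separating each pair.
It is the median of `x`, `y` and a far vertex of `A`, where `x` separates `B` from `A, C` and `y`
separates `C` from `A, B`; it is unique, as two distinct centres `c, c'` would each have two of the
three ends on the side away from the other, and then `c'` could not separate those two. A
self-embedding fixing `A, B, C` maps their centre to a centre, hence fixes it, and is elliptic.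
-/

open Filter

variable {G : SimpleGraph V} {x a b c d : V}

def SameSide (G : SimpleGraph V) (x a b : V) : Prop :=
  ∃ w : G.Walk a b, x ∉ w.support

namespace SameSide

lemma refl (h : a ≠ x) : SameSide G x a a :=
  ⟨Walk.nil, by simpa using h.symm⟩

lemma ne_left (h : SameSide G x a b) : a ≠ x := by
  rintro rfl
  obtain ⟨w, hw⟩ := h
  exact hw w.start_mem_support

lemma ne_right (h : SameSide G x a b) : b ≠ x := by
  rintro rfl
  obtain ⟨w, hw⟩ := h
  exact hw w.end_mem_support

lemma symm (h : SameSide G x a b) : SameSide G x b a :=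
  let ⟨w, hw⟩ := h
  ⟨w.reverse, by simpa using hw⟩

lemma trans (h₁ : SameSide G x a b) (h₂ : SameSide G x b c) : SameSide G x a c :=
  let ⟨w₁, hw₁⟩ := h₁
  let ⟨w₂, hw₂⟩ := h₂
  ⟨w₁.append w₂, by simp [Walk.mem_support_append_iff, hw₁, hw₂]⟩

lemma of_adj (h : G.Adj a b) (ha : a ≠ x) (hb : b ≠ x) : SameSide G x a b :=
  ⟨h.toWalk, by simp [ha.symm, hb.symm]⟩

lemma of_mem_support {w : G.Walk a b} (hx : x ∉ w.support) (hc : c ∈ w.support) :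
    SameSide G x a c := by
  classical
  exact ⟨w.takeUntil c hc, fun h => hx (w.support_takeUntil_subset_support hc h)⟩

end SameSide

lemma mem_support_of_not_sameSide (h : ¬ SameSide G x a b) (w : G.Walk a b) : x ∈ w.support :=
  not_not.1 fun hx => h ⟨w, hx⟩

lemma SimpleGraph.Connected.sameSide_of_not_sameSide (hG : G.Connected) {c' : V} (hne : c ≠ c')
    (h : ¬ SameSide G c a c') : SameSide G c' a c := by
  classical
  obtain ⟨p, hp, -⟩ := (hG a c').exists_path_of_dist
  have hc := mem_support_of_not_sameSide h p
  exact ⟨p.takeUntil c hc, p.endpoint_notMem_support_takeUntil hp hc hne.symm⟩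

lemma SimpleGraph.Connected.eq_of_not_sameSide (hG : G.Connected) {c' : V}
    (hc : ¬ SameSide G c a b ∧ ¬ SameSide G c a d ∧ ¬ SameSide G c b d)
    (hc' : ¬ SameSide G c' a b ∧ ¬ SameSide G c' a d ∧ ¬ SameSide G c' b d) : c = c' := by
  by_contra hne
  have key : ∀ {u v : V}, ¬ SameSide G c u c' → ¬ SameSide G c v c' → SameSide G c' u v :=
    fun hu hv => (hG.sameSide_of_not_sameSide hne hu).trans
      (hG.sameSide_of_not_sameSide hne hv).symm
  by_cases ha : SameSide G c a c'
  · have hb : ¬ SameSide G c b c' := fun hb => hc.1 (ha.trans hb.symm)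
    have hd : ¬ SameSide G c d c' := fun hd => hc.2.1 (ha.trans hd.symm)
    exact hc'.2.2 (key hb hd)
  · by_cases hb : SameSide G c b c'
    · have hd : ¬ SameSide G c d c' := fun hd => hc.2.2 (hb.trans hd.symm)
      exact hc'.2.1 (key ha hd)
    · exact hc'.1 (key ha hb)

namespace SimpleGraph.IsAcyclic

lemma not_sameSide_iff_mem_support (hG : G.IsAcyclic) {p : G.Walk a b} (hp : p.IsPath) :
    ¬ SameSide G x a b ↔ x ∈ p.support := by
  classical
  refine ⟨fun h => mem_support_of_not_sameSide h p, fun hx ⟨w, hw⟩ => hw ?_⟩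
  have hbypass : w.bypass = p :=
    congrArg Subtype.val ((hG.subsingleton_path a b).elim ⟨_, w.bypass_isPath⟩ ⟨p, hp⟩)
  exact w.support_bypass_subset_support (hbypass ▸ hx)

lemma not_sameSide_and_sameSide (hG : G.IsAcyclic) {u v : V} (h : G.Adj u v) :
    ¬ (SameSide G u v b ∧ SameSide G v u b) := by
  classical
  rintro ⟨huv, ⟨w, hw⟩⟩
  have hv : v ∉ w.reverse.bypass.support := fun hv =>
    hw (by simpa using w.reverse.support_bypass_subset_support hv)
  have hpath := (w.reverse.bypass_isPath).concat hv h
  exact (hG.not_sameSide_iff_mem_support hpath).2 (by simp) huv.symm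

lemma exists_median (hG : G.IsAcyclic) (b : V) {a c : V} (p : G.Walk a c) (hp : p.IsPath) :
    ∃ z, ¬ SameSide G z a b ∧ ¬ SameSide G z b c ∧ ¬ SameSide G z a c := by
  induction p with
  | nil => exact ⟨_, fun h => h.ne_left rfl, fun h => h.ne_right rfl, fun h => h.ne_left rfl⟩
  | @cons a a' c hadj q ih =>
    obtain ⟨hq, haq⟩ := Walk.cons_isPath_iff hadj q |>.1 hp
    obtain ⟨z, hza'b, hzbc, hza'c⟩ := ih hq
    by_cases habc : SameSide G a b c
    swap
    · exact ⟨a, fun h => h.ne_left rfl, habc, fun h => h.ne_left rfl⟩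
    have hza : z ≠ a := by rintro rfl; exact hzbc habc
    have haa'c : SameSide G a a' c := ⟨q, haq⟩
    refine ⟨z, fun hzab => ?_, hzbc, fun hzac => ?_⟩
    · by_cases hz : z = a'
      · subst hz
        exact hG.not_sameSide_and_sameSide hadj ⟨(habc.trans haa'c.symm).symm, hzab⟩
      · exact hza'b ((SameSide.of_adj hadj hza.symm (Ne.symm hz)).symm.trans hzab)
    · by_cases hz : z = a'
      · subst hz
        exact hG.not_sameSide_and_sameSide hadj ⟨haa'c, hzac⟩
      · exact hza'c ((SameSide.of_adj hadj hza.symm (Ne.symm hz)).symm.trans hzac)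

end SimpleGraph.IsAcyclic

lemma SimpleGraph.IsTree.exists_median (hT : G.IsTree) (a b c : V) :
    ∃ z, ¬ SameSide G z a b ∧ ¬ SameSide G z b c ∧ ¬ SameSide G z a c :=
  let ⟨p, hp, _⟩ := (hT.connected a c).exists_path_of_dist
  hT.isAcyclic.exists_median b p hp

lemma SimpleGraph.IsTree.not_sameSide_image {g : V → V} (hT : G.IsTree) (hg : IsEmb G g)
    (h : ¬ SameSide G x a b) : ¬ SameSide G (g x) (g a) (g b) := by
  obtain ⟨p, hp, -⟩ := (hT.connected a b).exists_path_of_dist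
  let φ : G →g G := ⟨g, hg.2 _ _⟩
  have hx := (hT.isAcyclic.not_sameSide_iff_mem_support hp).1 h
  refine (hT.isAcyclic.not_sameSide_iff_mem_support (hp.map (f := φ) hg.1)).2 ?_
  rw [Walk.support_map]
  exact List.mem_map_of_mem hx

namespace GRay

variable (R : GRay G)

lemma eventually_notMem {s : Set V} (hs : s.Finite) : ∀ᶠ i in atTop, R.f i ∉ s :=
  Nat.cofinite_eq_atTop ▸ R.inj.tendsto_cofinite.eventually hs.eventually_cofinite_notMem

lemma eventually_ne (x : V) : ∀ᶠ i in atTop, R.f i ≠ x := by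
  simpa using R.eventually_notMem (Set.finite_singleton x)

lemma sameSide_of_le {i j : ℕ} (hi : ∀ k, i ≤ k → R.f k ≠ x) (hij : i ≤ j) :
    SameSide G x (R.f i) (R.f j) := by
  induction j, hij using Nat.le_induction with
  | base => exact SameSide.refl (hi i le_rfl)
  | succ j hij ih => exact ih.trans (.of_adj (R.adj j) (hi j hij) (hi (j + 1) (by omega)))

lemma sameSide {i j : ℕ} (hi : ∀ k, i ≤ k → R.f k ≠ x) (hj : ∀ k, j ≤ k → R.f k ≠ x) :
    SameSide G x (R.f i) (R.f j) := by
  rcases le_total i j with h | h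
  · exact R.sameSide_of_le hi h
  · exact (R.sameSide_of_le hj h).symm

def drop (ℓ : ℕ) : GRay G where
  f n := R.f (n + ℓ)
  inj _ _ h := by simpa using R.inj h
  adj n := by simpa [Nat.add_right_comm] using R.adj (n + ℓ)

lemma rayEquiv_drop (ℓ : ℕ) : RayEquiv G (R.drop ℓ) R := by
  intro x
  obtain ⟨M, hM⟩ := eventually_atTop.1 (R.eventually_ne x)
  exact ⟨M, M + ℓ, fun i hi => hM _ (by omega), fun j hj => hM _ (by omega),
    SameSide.refl (hM _ (by omega))⟩

end GRay

def Separates (G : SimpleGraph V) (x : V) (R S : GRay G) : Prop :=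
  ∀ᶠ m in atTop, ¬ SameSide G x (R.f m) (S.f m)

variable {R S T : GRay G}

lemma Separates.symm (h : Separates G x R S) : Separates G x S R :=
  h.mono fun _ hm hs => hm hs.symm

/-- The right-hand side is the clause of `RayEquiv` at the vertex `x`. -/
lemma not_separates_iff : ¬ Separates G x R S ↔ ∃ m n : ℕ, (∀ i, m ≤ i → R.f i ≠ x) ∧
    (∀ j, n ≤ j → S.f j ≠ x) ∧ SameSide G x (R.f m) (S.f n) := by
  constructor
  · intro h
    obtain ⟨M, hM⟩ := eventually_atTop.1 ((R.eventually_ne x).and (S.eventually_ne x))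
    obtain ⟨m, hm, hmM⟩ := ((not_eventually.1 h).and_eventually (eventually_ge_atTop M)).exists
    exact ⟨m, m, fun i hi => (hM i (hmM.trans hi)).1, fun j hj => (hM j (hmM.trans hj)).2,
      not_not.1 hm⟩
  · rintro ⟨m, n, hm, hn, hmn⟩ h
    obtain ⟨k, hk, hkmn⟩ := (h.and (eventually_ge_atTop (max m n))).exists
    exact hk (((R.sameSide (fun i hi => hm i ((le_of_max_le_left hkmn).trans hi)) hm).trans
      hmn).trans (S.sameSide hn (fun j hj => hn j ((le_of_max_le_right hkmn).trans hj))))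

lemma rayEquiv_iff_forall_not_separates : RayEquiv G R S ↔ ∀ x, ¬ Separates G x R S :=
  forall_congr' fun _ => not_separates_iff.symm

lemma not_separates_trans (h₁ : ¬ Separates G x R S) (h₂ : ¬ Separates G x S T) :
    ¬ Separates G x R T := by
  obtain ⟨m, n, hm, hn, hmn⟩ := not_separates_iff.1 h₁
  obtain ⟨m', n', hm', hn', hmn'⟩ := not_separates_iff.1 h₂
  exact not_separates_iff.2 ⟨m, n', hm, hn', (hmn.trans (S.sameSide hn hm')).trans hmn'⟩

lemma RayEquiv.symm (h : RayEquiv G R S) : RayEquiv G S R :=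
  rayEquiv_iff_forall_not_separates.2 fun x hx =>
    rayEquiv_iff_forall_not_separates.1 h x hx.symm

lemma RayEquiv.trans (h₁ : RayEquiv G R S) (h₂ : RayEquiv G S T) : RayEquiv G R T :=
  rayEquiv_iff_forall_not_separates.2 fun x =>
    not_separates_trans (rayEquiv_iff_forall_not_separates.1 h₁ x)
      (rayEquiv_iff_forall_not_separates.1 h₂ x)

lemma exists_separates_of_not_rayEquiv (h : ¬ RayEquiv G R S) : ∃ x, Separates G x R S := by
  simpa [rayEquiv_iff_forall_not_separates] using h

lemma Separates.of_rayEquiv {R' S' : GRay G} (h : Separates G x R' S') (hR : RayEquiv G R' R)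
    (hS : RayEquiv G S' S) : Separates G x R S := by
  by_contra hRS
  exact not_separates_trans (not_separates_trans (rayEquiv_iff_forall_not_separates.1 hR x) hRS)
    (rayEquiv_iff_forall_not_separates.1 hS.symm x) h

lemma Separates.or (h : Separates G x R S) (T : GRay G) :
    Separates G x R T ∨ Separates G x T S := by
  by_contra! hT
  exact not_separates_trans hT.1 hT.2 h

lemma Separates.image_of_fixesEnd {g : V → V} (hT : G.IsTree) (hg : IsEmb G g)
    (h : Separates G x R S) (hR : FixesEnd G g R) (hS : FixesEnd G g S) :
    Separates G (g x) R S := by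
  obtain ⟨R', hR', eR⟩ := hR
  obtain ⟨S', hS', eS⟩ := hS
  refine Separates.of_rayEquiv ?_ eR eS
  filter_upwards [h] with m hm
  rw [hR', hS']
  exact hT.not_sameSide_image hg hm

def IsCenter (G : SimpleGraph V) (c : V) (A B C : GRay G) : Prop :=
  Separates G c A B ∧ Separates G c A C ∧ Separates G c B C

variable {A B C : GRay G}

lemma IsCenter.eq (hG : G.Connected) {c' : V} (h : IsCenter G c A B C)
    (h' : IsCenter G c' A B C) : c = c' := by
  obtain ⟨m, h₁, h₂, h₃, h₁', h₂', h₃'⟩ :=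
    (h.1.and (h.2.1.and (h.2.2.and (h'.1.and (h'.2.1.and h'.2.2))))).exists
  exact hG.eq_of_not_sameSide ⟨h₁, h₂, h₃⟩ ⟨h₁', h₂', h₃'⟩

/-- The centre is the median of `x`, `y` and a far vertex of `A`. -/
lemma exists_isCenter_of_separates (hT : G.IsTree) {y : V}
    (hxAB : Separates G x A B) (hxBC : Separates G x B C)
    (hyAC : Separates G y A C) (hyBC : Separates G y B C) : ∃ c, IsCenter G c A B C := by
  obtain ⟨p, hp, -⟩ := (hT.connected x y).exists_path_of_dist
  obtain ⟨m₀, hm₀⟩ := eventually_atTop.1 (A.eventually_notMem (List.finite_toSet p.support))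
  obtain ⟨c, hcx, hcy, hcxy⟩ := hT.exists_median x (A.f m₀) y
  have hcp : c ∈ p.support := (hT.isAcyclic.not_sameSide_iff_mem_support hp).1 hcxy
  have hAc : ∀ i, m₀ ≤ i → A.f i ≠ c := fun i hi hc => hm₀ i hi (hc ▸ hcp)
  have hfar : ∀ m, m₀ ≤ m → SameSide G c (A.f m₀) (A.f m) := fun m hm =>
    A.sameSide hAc fun i hi => hAc i (hm.trans hi)
  refine ⟨c, ?_, ?_, ?_⟩
  · filter_upwards [hxAB, eventually_ge_atTop m₀] with m hm hm₀m
    rintro ⟨w, hw⟩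
    exact hcx ((hfar m hm₀m).trans (.of_mem_support hw (mem_support_of_not_sameSide hm w))).symm
  · filter_upwards [hyAC, eventually_ge_atTop m₀] with m hm hm₀m
    rintro ⟨w, hw⟩
    exact hcy ((hfar m hm₀m).trans (.of_mem_support hw (mem_support_of_not_sameSide hm w)))
  · filter_upwards [hxBC, hyBC] with m hxm hym
    rintro ⟨w, hw⟩
    exact hcxy ((SameSide.of_mem_support hw (mem_support_of_not_sameSide hxm w)).symm.trans
      (.of_mem_support hw (mem_support_of_not_sameSide hym w)))

lemma exists_isCenter (hT : G.IsTree) (hAB : ¬ RayEquiv G A B) (hAC : ¬ RayEquiv G A C)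
    (hBC : ¬ RayEquiv G B C) : ∃ c, IsCenter G c A B C := by
  obtain ⟨x, hx⟩ := exists_separates_of_not_rayEquiv hAB
  obtain ⟨y, hy⟩ := exists_separates_of_not_rayEquiv hAC
  obtain ⟨z, hz⟩ := exists_separates_of_not_rayEquiv hBC
  rcases hx.or C with hxAC | hxCB
  · rcases hz.or A with hzBA | hzAC
    · obtain ⟨c, h₁, h₂, h₃⟩ := exists_isCenter_of_separates hT hxAC.symm hx hz.symm hzBA.symm
      exact ⟨c, h₃, h₁.symm, h₂.symm⟩
    · obtain ⟨c, h₁, h₂, h₃⟩ := exists_isCenter_of_separates hT hx.symm hxAC hz hzAC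
      exact ⟨c, h₁.symm, h₃, h₂⟩
  · rcases hy.or B with hyAB | hyBC
    · obtain ⟨c, h₁, h₂, h₃⟩ := exists_isCenter_of_separates hT hxCB hx.symm hy.symm hyAB.symm
      exact ⟨c, h₃.symm, h₂.symm, h₁.symm⟩
    · exact exists_isCenter_of_separates hT hx hxCB.symm hy hyBC

section SelfEmbedding

variable {g : V → V}

lemma elliptic_of_apply_eq {v : V} (hv : g v = v) : Elliptic G g :=
  ⟨{v}, Set.singleton_nonempty v, Set.finite_singleton v, by simp,
    by rw [Set.image_singleton, hv]⟩

lemma elliptic_of_adj_of_swap {u v : V} (h : G.Adj u v) (hu : g u = v) (hv : g v = u) :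
    Elliptic G g :=
  ⟨{u, v}, Set.insert_nonempty u {v}, Set.toFinite _, induce_pair_connected_of_adj h,
    by rw [Set.image_pair, hu, hv, Set.pair_comm]⟩

lemma fixesVertex_of_fixesEnd_of_not_rayEquiv (hT : G.IsTree) (hg : IsEmb G g)
    (hA : FixesEnd G g A) (hB : FixesEnd G g B) (hC : FixesEnd G g C)
    (hAB : ¬ RayEquiv G A B) (hAC : ¬ RayEquiv G A C) (hBC : ¬ RayEquiv G B C) :
    FixesVertex g := by
  obtain ⟨c, hc₁, hc₂, hc₃⟩ := exists_isCenter hT hAB hAC hBC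
  have hgc : IsCenter G (g c) A B C :=
    ⟨hc₁.image_of_fixesEnd hT hg hA hB, hc₂.image_of_fixesEnd hT hg hA hC,
      hc₃.image_of_fixesEnd hT hg hB hC⟩
  exact ⟨c, hgc.eq hT.connected ⟨hc₁, hc₂, hc₃⟩⟩

end SelfEmbedding

lemma Nat.forall_of_forall_lt_of_add {ℓ : ℕ} (hℓ : 0 < ℓ) {p : ℕ → Prop}
    (hbase : ∀ k < ℓ, p k) (hstep : ∀ k, p k → p (k + ℓ)) (k : ℕ) : p k := by
  induction k using Nat.strong_induction_on with
  | _ k ih =>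
    rcases lt_or_ge k ℓ with hk | hk
    · exact hbase k hk
    · simpa [Nat.sub_add_cancel hk] using hstep _ (ih (k - ℓ) (by omega))

lemma SimpleGraph.Walk.dist_getVert_le {u v : V} (p : G.Walk u v) {i j : ℕ} (hij : i ≤ j) :
    G.dist (p.getVert i) (p.getVert j) ≤ j - i := by
  have h := dist_le ((p.drop i).take (j - i))
  rw [Walk.take_length, Walk.drop_getVert, Nat.add_sub_cancel' hij] at h
  exact h.trans (min_le_left _ _)

section Nonbacktracking

variable {f : ℕ → V} {hf : ∀ n, G.Adj (f n) (f (n + 1))}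

def seqWalk (f : ℕ → V) (hf : ∀ n, G.Adj (f n) (f (n + 1))) : (n : ℕ) → G.Walk (f 0) (f n)
  | 0 => Walk.nil
  | n + 1 => (seqWalk f hf n).concat (hf n)

lemma mem_support_seqWalk {i n : ℕ} (hi : i ≤ n) : f i ∈ (seqWalk f hf n).support := by
  induction n with
  | zero =>
    obtain rfl : i = 0 := by omega
    exact Walk.start_mem_support _
  | succ n ih =>
    rw [seqWalk, Walk.support_concat, List.mem_append]
    rcases hi.lt_or_eq with hi | rfl
    · exact Or.inl (ih (by omega))
    · simp

variable (hG : G.IsAcyclic) (hnb : ∀ n, f (n + 2) ≠ f n)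
include hG hnb

lemma succ_notMem_support_seqWalk {n : ℕ} (hp : (seqWalk f hf n).IsPath) :
    f (n + 1) ∉ (seqWalk f hf n).support := by
  intro hmem
  have h := hG.eq_penultimate_of_adj_end hp (hf n) hmem
  cases n with
  | zero => exact (hf 0).ne (by simpa [seqWalk] using h.symm)
  | succ m => exact hnb m (by simpa [seqWalk] using h)

lemma isPath_seqWalk (n : ℕ) : (seqWalk f hf n).IsPath := by
  induction n with
  | zero => exact Walk.IsPath.nil
  | succ n ih => exact ih.concat (succ_notMem_support_seqWalk hG hnb ih) (hf n)

lemma injective_of_nonbacktracking (hf : ∀ n, G.Adj (f n) (f (n + 1))) : Function.Injective f := by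
  intro i j hij
  by_contra hne
  wlog hlt : i < j generalizing i j
  · exact this hij.symm (Ne.symm hne) (by omega)
  obtain ⟨n, rfl⟩ : ∃ n, j = n + 1 := ⟨j - 1, by omega⟩
  exact succ_notMem_support_seqWalk (hf := hf) hG hnb (isPath_seqWalk hG hnb n)
    (hij ▸ mem_support_seqWalk (by omega))

end Nonbacktracking

section Translation

variable {g : V → V} {v : V} {P : G.Walk v (g v)}

/-- The concatenation of `P, g ∘ P, g² ∘ P, …`. -/
def translationSeq (g : V → V) (P : G.Walk v (g v)) (k : ℕ) : V :=
  g^[k / P.length] (P.getVert (k % P.length))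

lemma translationSeq_add_length (hP : 0 < P.length) (k : ℕ) :
    translationSeq g P (k + P.length) = g (translationSeq g P k) := by
  simp [translationSeq, Nat.add_div_right _ hP, Function.iterate_succ_apply']

lemma translationSeq_of_le (hP : 0 < P.length) {k : ℕ} (hk : k ≤ P.length) :
    translationSeq g P k = P.getVert k := by
  rcases hk.lt_or_eq with hk | rfl
  · simp [translationSeq, Nat.div_eq_of_lt hk, Nat.mod_eq_of_lt hk]
  · simp [translationSeq, Nat.div_self hP]

lemma adj_translationSeq (hg : IsEmb G g) (hP : 0 < P.length) :
    ∀ k, G.Adj (translationSeq g P k) (translationSeq g P (k + 1)) := by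
  refine Nat.forall_of_forall_lt_of_add hP (fun k hk => ?_) (fun k hk => ?_)
  · rw [translationSeq_of_le hP hk.le, translationSeq_of_le hP hk]
    exact P.adj_getVert_succ hk
  · rw [Nat.add_right_comm, translationSeq_add_length hP, translationSeq_add_length hP]
    exact hg.2 _ _ hk

lemma translationSeq_add_two_ne (hg : IsEmb G g) (hE : ¬ Elliptic G g) (hP : P.IsPath)
    (hℓ : 0 < P.length) (hmin : ∀ u, P.length ≤ G.dist u (g u)) :
    ∀ k, translationSeq g P (k + 2) ≠ translationSeq g P k := by
  refine Nat.forall_of_forall_lt_of_add hℓ (fun k hk => ?_) (fun k hk h => hk (hg.1 ?_))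
  · rcases (by omega : k + 2 ≤ P.length ∨ k + 1 = P.length) with hk2 | hk1
    · rw [translationSeq_of_le hℓ hk2, translationSeq_of_le hℓ hk.le]
      intro h
      have := hP.getVert_injOn (by simp; omega) (by simp; omega) h
      omega
    · rw [show k + 2 = 1 + P.length by omega, translationSeq_add_length hℓ,
        translationSeq_of_le hℓ hk.le, translationSeq_of_le hℓ (by omega)]
      intro h
      rcases (by omega : k = 0 ∨ 1 ≤ k) with rfl | hk1'
      · rw [show 1 = P.length by omega, Walk.getVert_length, Walk.getVert_zero] at h
        have hadj := P.adj_getVert_succ (i := 0) (by omega)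
        rw [Walk.getVert_zero, zero_add, show 1 = P.length by omega, Walk.getVert_length] at hadj
        exact hE (elliptic_of_adj_of_swap hadj rfl h)
      · have := hmin (P.getVert 1)
        rw [h] at this
        have := P.dist_getVert_le hk1'
        omega
  · rw [← translationSeq_add_length hℓ, ← translationSeq_add_length hℓ, Nat.add_right_comm]
    exact h

lemma fixesEnd_of_apply_eq_add {R : GRay G} {ℓ : ℕ} (h : ∀ k, g (R.f k) = R.f (k + ℓ)) :
    FixesEnd G g R :=
  ⟨R.drop ℓ, fun k => (h k).symm, R.rayEquiv_drop ℓ⟩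

lemma exists_fixesEnd (hT : G.IsTree) (hg : IsEmb G g) (hE : ¬ Elliptic G g) :
    ∃ R : GRay G, FixesEnd G g R := by
  have := hT.connected.nonempty
  set v := Function.argmin fun u => G.dist u (g u)
  obtain ⟨P, hP, hPlen⟩ := (hT.connected v (g v)).exists_path_of_dist
  have hmin : ∀ u, P.length ≤ G.dist u (g u) := fun u => by
    rw [hPlen]
    exact Function.argmin_le (fun u => G.dist u (g u)) u
  have hℓ : 0 < P.length := Nat.pos_of_ne_zero fun h =>
    hE (elliptic_of_apply_eq (hT.connected.dist_eq_zero_iff.1 (hPlen ▸ h)).symm)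
  have hadj := adj_translationSeq hg hℓ
  refine ⟨⟨translationSeq g P, injective_of_nonbacktracking hT.isAcyclic
    (translationSeq_add_two_ne hg hE hP hℓ hmin) hadj, hadj⟩,
    fixesEnd_of_apply_eq_add fun k => (translationSeq_add_length hℓ k).symm⟩

end Translation

theorem stmt3 (G : SimpleGraph V) (hT : G.IsTree) (g : V → V) (hg : IsEmb G g) :
    (Elliptic G g ∨ Hyperbolic G g ∨ Parabolic G g) ∧
      ¬ (Elliptic G g ∧ Hyperbolic G g) ∧ ¬ (Elliptic G g ∧ Parabolic G g) ∧
      ¬ (Hyperbolic G g ∧ Parabolic G g) := by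
  refine ⟨?_, fun h => h.2.1 h.1, fun h => h.2.1 h.1, ?_⟩
  · by_cases hE : Elliptic G g
    · exact Or.inl hE
    obtain ⟨R, hR⟩ := exists_fixesEnd hT hg hE
    by_cases hone : ∀ S : GRay G, FixesEnd G g S → RayEquiv G S R
    · exact Or.inr (Or.inr ⟨hE, R, hR, hone⟩)
    push Not at hone
    obtain ⟨S, hS, hSR⟩ := hone
    refine Or.inr (Or.inl ⟨hE, S, R, hSR, hS, hR, fun T hT' => ?_⟩)
    by_contra! hTSR
    obtain ⟨v, hv⟩ := fixesVertex_of_fixesEnd_of_not_rayEquiv hT hg hT' hS hR hTSR.1 hTSR.2 hSR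
    exact hE (elliptic_of_apply_eq hv)
  · rintro ⟨⟨-, R₁, R₂, h₁₂, hR₁, hR₂, -⟩, -, R, -, hall⟩
    exact h₁₂ ((hall R₁ hR₁).trans (hall R₂ hR₂).symm)
end

section
/- Every non-elliptic self-embedding of a tree fixes at least one end. -/
open SimpleGraph

variable {V : Type*}

lemma getVert_ne_of_isPath {G : SimpleGraph V} {a b : V} (p : G.Walk a b) (hp : p.IsPath) :
    ∀ i j, i < j → j ≤ p.length → p.getVert i ≠ p.getVert j := by
  induction p with
  | nil => intro i j hij hj; simp [Walk.length_nil] at hj; omega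
  | @cons a c b h q ih =>
    intro i j hij hj heq
    rw [Walk.length_cons] at hj
    cases i with
    | zero =>
      rw [Walk.getVert_zero, Walk.getVert_cons q h (by omega : j ≠ 0)] at heq
      have : a ∈ q.support := Walk.mem_support_iff_exists_getVert.mpr ⟨j - 1, heq.symm, by omega⟩
      exact ((Walk.cons_isPath_iff h q).mp hp).2 this
    | succ i =>
      rw [Walk.getVert_cons_succ, Walk.getVert_cons q h (by omega : j ≠ 0)] at heq
      exact ih ((Walk.cons_isPath_iff h q).mp hp).1 i (j-1) (by omega) (by omega) heq

def rayWalk (G : SimpleGraph V) (f : ℕ → V) (hadj : ∀ n, G.Adj (f n) (f (n+1))) :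
    (k i : ℕ) → G.Walk (f i) (f (i + k))
  | 0, _ => Walk.nil
  | k+1, i => (Walk.cons (hadj i) (rayWalk G f hadj k (i+1))).copy rfl (congrArg f (by omega))

lemma rayWalk_length (G : SimpleGraph V) (f : ℕ → V) (hadj : ∀ n, G.Adj (f n) (f (n+1))) :
    ∀ (k i : ℕ), (rayWalk G f hadj k i).length = k
  | 0, _ => rfl
  | k+1, i => by simp [rayWalk, rayWalk_length G f hadj k (i+1)]

lemma rayWalk_getVert (G : SimpleGraph V) (f : ℕ → V) (hadj : ∀ n, G.Adj (f n) (f (n+1))) :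
    ∀ (k i j : ℕ), j ≤ k → (rayWalk G f hadj k i).getVert j = f (i + j)
  | 0, i, j, hj => by
    have : j = 0 := by omega
    subst this; simp [rayWalk]
  | k+1, i, j, hj => by
    cases j with
    | zero => simp [rayWalk]
    | succ j =>
      simp only [rayWalk, Walk.getVert_copy, Walk.getVert_cons_succ]
      rw [rayWalk_getVert G f hadj k (i+1) j (by omega)]
      exact congrArg f (by omega)

lemma rayWalk_isPath [DecidableEq V] {G : SimpleGraph V} (hac : G.IsAcyclic) (f : ℕ → V)
    (hadj : ∀ n, G.Adj (f n) (f (n+1))) (hnb : ∀ n, f (n+2) ≠ f n) :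
    ∀ (k i : ℕ), (rayWalk G f hadj k i).IsPath
  | 0, _ => by simp [rayWalk]
  | k+1, i => by
    have ih := rayWalk_isPath hac f hadj hnb k (i+1)
    simp only [rayWalk, Walk.isPath_copy]
    rw [Walk.cons_isPath_iff]
    refine ⟨ih, fun hmem => ?_⟩
    obtain ⟨j, hgv, hjle⟩ := Walk.mem_support_iff_exists_getVert.mp hmem
    rw [rayWalk_length] at hjle
    rw [rayWalk_getVert G f hadj k (i+1) j hjle] at hgv
    cases j with
    | zero => exact (hadj i).ne' hgv
    | succ j =>
      have hk1 : 1 ≤ k := by omega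
      have hT' : ((rayWalk G f hadj k (i+1)).takeUntil (f i) hmem).IsPath := ih.takeUntil hmem
      have hE : (Walk.cons (hadj i).symm (Walk.nil)).IsPath := by
        rw [Walk.cons_isPath_iff]
        exact ⟨Walk.IsPath.nil, by simp [(hadj i).ne']⟩
      have hTE : (rayWalk G f hadj k (i+1)).takeUntil (f i) hmem
          = Walk.cons (hadj i).symm Walk.nil := by
        have := isAcyclic_iff_path_unique.mp hac ⟨_, hT'⟩ ⟨_, hE⟩
        exact Subtype.ext_iff.mp this
      have hspec := (rayWalk G f hadj k (i+1)).take_spec hmem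
      rw [hTE, Walk.cons_append, Walk.nil_append] at hspec
      have hgv1 : (rayWalk G f hadj k (i+1)).getVert 1 = f i := by
        rw [← hspec, Walk.getVert_cons_succ, Walk.getVert_zero]
      rw [rayWalk_getVert G f hadj k (i+1) 1 hk1] at hgv1
      exact hnb i (by simpa [show i+1+1 = i+2 from by omega] using hgv1)

lemma elliptic_of_fixed_vertex {G : SimpleGraph V} {g : V → V} {v : V} (hv : g v = v) :
    FixesFiniteSubtree G g := by
  refine ⟨{v}, Set.singleton_nonempty v, Set.finite_singleton v, ?_,
    by rw [Set.image_singleton, hv]⟩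
  haveI : Nonempty ↥({v} : Set V) := ⟨⟨v, rfl⟩⟩
  refine ⟨fun a b => ?_⟩
  have : a = b := Subtype.ext (by
    have ha : (a : V) = v := a.2
    have hb : (b : V) = v := b.2
    rw [ha, hb])
  rw [this]

lemma elliptic_of_swapped_edge {G : SimpleGraph V} {g : V → V} {u v : V}
    (h : G.Adj u v) (hu : g u = v) (hv : g v = u) : FixesFiniteSubtree G g := by
  refine ⟨{u, v}, ⟨u, by simp⟩, (Set.finite_singleton v).insert u, ?_, ?_⟩
  · haveI : Nonempty ↥({u, v} : Set V) := ⟨⟨u, by simp⟩⟩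
    refine ⟨fun a b => ?_⟩
    have ha := a.2; have hb := b.2
    simp only [Set.mem_insert_iff, Set.mem_singleton_iff] at ha hb
    have key : ∀ (x y : ↥({u, v} : Set V)), (x : V) = u → (y : V) = v →
        (G.induce {u, v}).Adj x y := by
      intro x y hx hy
      have : G.Adj (x : V) (y : V) := by rw [hx, hy]; exact h
      exact this
    rcases ha with ha | ha <;> rcases hb with hb | hb
    · exact (Subtype.ext (ha.trans hb.symm) ▸ Reachable.refl a)
    · exact (key a b ha hb).reachable
    · exact ((key b a hb ha).reachable).symm
    · exact (Subtype.ext (ha.trans hb.symm) ▸ Reachable.refl a)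
  · rw [Set.image_pair, hu, hv, Set.pair_comm]

theorem stmt4 (G : SimpleGraph V) (hT : G.IsTree) (g : V → V) (hg : IsEmb G g)
    (hne : ¬ Elliptic G g) : ∃ R : GRay G, FixesEnd G g R := by
  classical
  obtain ⟨v0⟩ : Nonempty V := hT.isConnected.nonempty
  have hNSne : Set.Nonempty {n : ℕ | ∃ w : V, ∃ p : G.Walk w (g w), p.IsPath ∧ p.length = n} := by
    obtain ⟨p, hp, -⟩ := hT.existsUnique_path v0 (g v0)
    exact ⟨p.length, v0, p, hp, rfl⟩
  obtain ⟨u, P, hP, hlen0⟩ := Nat.sInf_mem hNSne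
  obtain ⟨N, hlen⟩ : ∃ N, P.length = N := ⟨_, rfl⟩
  have hmin : ∀ (w : V) (q : G.Walk w (g w)), q.IsPath → N ≤ q.length := by
    intro w q hq
    rw [← hlen, hlen0]
    exact Nat.sInf_le ⟨w, q, hq, rfl⟩
  have hN1 : 1 ≤ N := by
    by_contra hcon
    have h0 : P.length = 0 := by omega
    exact hne (elliptic_of_fixed_vertex (Walk.eq_of_length_eq_zero h0).symm)
  have hgu : P.getVert N = g u := by rw [← hlen]; exact P.getVert_length
  have hadj01 : G.Adj u (P.getVert 1) := by
    have := P.adj_getVert_succ (i := 0) (by omega)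
    rwa [Walk.getVert_zero] at this
  have key : g (P.getVert 1) ≠ P.getVert (N - 1) := by
    intro hkey
    rcases Nat.lt_or_ge N 3 with hN3 | hN3
    · rcases (by omega : N = 1 ∨ N = 2) with h1 | h2
      · have e1 : P.getVert 1 = g u := by rw [h1] at hgu; exact hgu
        have e0 : P.getVert (N - 1) = u := by rw [h1]; exact P.getVert_zero
        rw [e1, e0] at hkey
        have hadj : G.Adj u (g u) := by rwa [e1] at hadj01
        exact hne (elliptic_of_swapped_edge hadj rfl hkey)
      · rw [(by rw [h2] : P.getVert (N-1) = P.getVert 1)] at hkey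
        exact hne (elliptic_of_fixed_vertex hkey)
    · have h1mem : P.getVert 1 ∈ P.support :=
        Walk.mem_support_iff_exists_getVert.mpr ⟨1, rfl, by omega⟩
      have hTpath := hP.takeUntil h1mem
      have hEpath : (Walk.cons hadj01 Walk.nil).IsPath := by
        rw [Walk.cons_isPath_iff]; exact ⟨Walk.IsPath.nil, by simp [hadj01.ne]⟩
      have hTE : P.takeUntil _ h1mem = Walk.cons hadj01 Walk.nil :=
        Subtype.ext_iff.mp (isAcyclic_iff_path_unique.mp hT.IsAcyclic ⟨_, hTpath⟩ ⟨_, hEpath⟩)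
      have hspec := P.take_spec h1mem
      have hDlen : (P.dropUntil _ h1mem).length = N - 1 := by
        have := congrArg Walk.length hspec
        rw [Walk.length_append, hTE] at this
        simp only [Walk.length_cons, Walk.length_nil] at this
        omega
      have hDmem : P.getVert (N - 1) ∈ (P.dropUntil _ h1mem).support := by
        have hm : P.getVert (N-1) ∈ P.support :=
          Walk.mem_support_iff_exists_getVert.mpr ⟨N-1, rfl, by omega⟩
        have hm2 : P.getVert (N-1) ∈ (P.takeUntil _ h1mem).support ∨
            P.getVert (N-1) ∈ (P.dropUntil _ h1mem).support := by
          rw [← Walk.mem_support_append_iff, hspec]; exact hm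
        rw [hTE] at hm2
        rcases hm2 with hm | hm
        · exfalso
          simp only [Walk.support_cons, Walk.support_nil, List.mem_cons,
            List.mem_singleton, List.not_mem_nil, or_false] at hm
          rcases hm with hm | hm
          · exact getVert_ne_of_isPath P hP 0 (N-1) (by omega) (by omega)
              (by rw [Walk.getVert_zero]; exact hm.symm)
          · exact getVert_ne_of_isPath P hP 1 (N-1) (by omega) (by omega) hm.symm
        · exact hm
      have hT2path := (hP.dropUntil h1mem).takeUntil hDmem
      have hT2len := Walk.length_takeUntil_le _ hDmem
      have := hmin (P.getVert 1)
        (((P.dropUntil _ h1mem).takeUntil _ hDmem).copy rfl hkey.symm) (by simpa using hT2path)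
      rw [Walk.length_copy] at this
      omega
  have hgadj : ∀ q (a b : V), G.Adj a b → G.Adj (g^[q] a) (g^[q] b) := by
    intro q
    induction q with
    | zero => simp
    | succ n ih =>
      intro a b hab
      rw [Function.iterate_succ_apply', Function.iterate_succ_apply']
      exact hg.2 _ _ (ih a b hab)
  have hginj : ∀ q, Function.Injective (g^[q]) := fun q => hg.1.iterate q
  set f : ℕ → V := fun k => g^[k / N] (P.getVert (k % N)) with hf
  have fget : ∀ q r, r ≤ N → f (q * N + r) = g^[q] (P.getVert r) := by
    intro q r hr
    rcases lt_or_eq_of_le hr with hlt | heq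
    · have hdiv : (q * N + r) / N = q := by
        rw [mul_comm, Nat.mul_add_div (by omega), Nat.div_eq_of_lt hlt, add_zero]
      have hmod : (q * N + r) % N = r := by
        rw [mul_comm, Nat.mul_add_mod, Nat.mod_eq_of_lt hlt]
      simp only [hf]
      rw [hdiv, hmod]
    · have h2 : q * N + N = (q+1) * N := by ring
      have hdiv : ((q+1) * N) / N = q + 1 := Nat.mul_div_cancel _ (by omega)
      have hmod : ((q+1) * N) % N = 0 := Nat.mul_mod_left _ _
      rw [heq, h2]
      simp only [hf]
      rw [hdiv, hmod, Walk.getVert_zero, Function.iterate_succ_apply, hgu]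
  have fval : ∀ k, f k = g^[k / N] (P.getVert (k % N)) := fun k => by rw [hf]
  have fadj : ∀ k, G.Adj (f k) (f (k+1)) := by
    intro k
    have hk : k = (k / N) * N + (k % N) := by rw [mul_comm]; exact (Nat.div_add_mod k N).symm
    have hrN : k % N < N := Nat.mod_lt _ (by omega)
    have e2 : f (k+1) = g^[k / N] (P.getVert (k % N + 1)) := by
      have h3 : k + 1 = (k / N) * N + (k % N + 1) := by omega
      rw [h3]; exact fget _ _ (by omega)
    rw [fval k, e2]
    exact hgadj _ _ _ (P.adj_getVert_succ (by omega))
  have hnb : ∀ k, f (k+2) ≠ f k := by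
    intro k he
    have hk : k = (k / N) * N + (k % N) := by rw [mul_comm]; exact (Nat.div_add_mod k N).symm
    have hrN : k % N < N := Nat.mod_lt _ (by omega)
    rcases Nat.lt_or_ge (k % N + 2) (N+1) with hcase | hcase
    · have e2 : f (k+2) = g^[k / N] (P.getVert (k % N + 2)) := by
        have h3 : k + 2 = (k / N) * N + (k % N + 2) := by omega
        rw [h3]; exact fget _ _ (by omega)
      rw [fval k, e2] at he
      exact getVert_ne_of_isPath P hP (k % N) (k % N + 2) (by omega) (by omega)
        (hginj _ he).symm
    · have hr : k % N = N - 1 := by omega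
      have hd : (k / N + 1) * N = (k / N) * N + N := by ring
      have e2 : f (k+2) = g^[k / N + 1] (P.getVert 1) := by
        have h3 : k + 2 = (k / N + 1) * N + 1 := by omega
        rw [h3]; exact fget _ _ (by omega)
      rw [fval k, e2, hr, Function.iterate_succ_apply] at he
      exact key (hginj _ he)
  have finj : Function.Injective f := by
    have key2 : ∀ i j, i < j → f i ≠ f j := by
      intro i j hij he
      have hW := rayWalk_isPath hT.IsAcyclic f fadj hnb (j - i) i
      have h0 : (rayWalk G f fadj (j-i) i).getVert 0 = f i := by
        rw [rayWalk_getVert G f fadj (j-i) i 0 (by omega)]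
        exact congrArg f (by omega)
      have h1 : (rayWalk G f fadj (j-i) i).getVert (j-i) = f j := by
        rw [rayWalk_getVert G f fadj (j-i) i (j-i) le_rfl]
        exact congrArg f (by omega)
      exact getVert_ne_of_isPath _ hW 0 (j-i) (by omega) (by rw [rayWalk_length])
        (by rw [h0, h1, he])
    intro a b he
    by_contra hab
    rcases Nat.lt_or_ge a b with hlt | hge
    · exact key2 a b hlt he
    · exact key2 b a (by omega) he.symm
  have fshift : ∀ k, f (k + N) = g (f k) := by
    intro k
    have hk : k = (k / N) * N + (k % N) := by rw [mul_comm]; exact (Nat.div_add_mod k N).symm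
    have hrN : k % N < N := Nat.mod_lt _ (by omega)
    have hd : (k / N + 1) * N = (k / N) * N + N := by ring
    have e2 : f (k + N) = g^[k / N + 1] (P.getVert (k % N)) := by
      have h3 : k + N = (k / N + 1) * N + (k % N) := by omega
      rw [h3]; exact fget _ _ (le_of_lt hrN)
    rw [fval k, e2, Function.iterate_succ_apply']
  refine ⟨⟨f, finj, fadj⟩, ⟨⟨fun n => f (n + N), ?_, ?_⟩, fun n => fshift n, ?_⟩⟩
  · intro a b hab
    have := finj hab
    omega
  · intro n
    have := fadj (n + N)
    simpa [show n + N + 1 = n + 1 + N from by omega] using this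
  · intro v
    by_cases hv : ∃ i, f i = v
    · obtain ⟨i0, hi0⟩ := hv
      refine ⟨i0 + 1, i0 + 1 + N, ?_, ?_, ?_⟩
      · intro i hi he
        have := finj (he.trans hi0.symm)
        omega
      · intro j hj he
        have := finj (he.trans hi0.symm)
        omega
      · refine ⟨Walk.nil, ?_⟩
        simp only [Walk.support_nil, List.mem_singleton]
        intro he'
        have := finj (hi0.trans he')
        omega
    · refine ⟨0, 0 + N, fun i _ he => hv ⟨i + N, he⟩, fun j _ he => hv ⟨j, he⟩, Walk.nil, ?_⟩
      simp only [Walk.support_nil, List.mem_singleton]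
      intro he'
      exact hv ⟨0 + N, he'.symm⟩
end

section
/- Let g be a non-elliptic self-embedding of a tree T. Then any two rays R1, R2 of T with g(R1) ⊆ R1 and g(R2) ⊆ R2 are equivalent (lie in the same end). -/
open SimpleGraph

variable {V : Type*}

/-!
On a ray `R` with `g(R) ⊆ R`, acyclicity forces `g` to act as a shift `R.f n ↦ R.f (n + d)`, and
`d > 0` since otherwise `g` fixes a vertex. Join the starts of `R1` and `R2` by a walk `p`. For
large `k`, the image of `p` under `g^k` runs from `R1.f (k d1)` to `R2.f (k d2)`; it has the length
of `p` while its start is far from any given vertex `v`, so it avoids `v` and joins tails of `R1` and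
`R2` in `G - v`.
-/

open Function

variable {G : SimpleGraph V} {g : V → V}

lemma SimpleGraph.IsAcyclic.length_eq_dist_of_isPath (hG : G.IsAcyclic) {u w : V}
    {p : G.Walk u w} (hp : p.IsPath) : p.length = G.dist u w := by
  obtain ⟨q, hq, hlen⟩ := p.reachable.exists_path_of_dist
  obtain rfl : p = q := congrArg Subtype.val ((hG.subsingleton_path u w).elim ⟨p, hp⟩ ⟨q, hq⟩)
  exact hlen

lemma Nat.apply_eq_apply_zero_add {m : ℕ → ℕ} (hm : Injective m)
    (hstep : ∀ n, m (n + 1) = m n + 1 ∨ m n = m (n + 1) + 1) (n : ℕ) : m n = m 0 + n := by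
  have hdown_persists : ∀ n, m n = m (n + 1) + 1 → m (n + 1) = m (n + 1 + 1) + 1 := fun n h =>
    (hstep (n + 1)).resolve_left fun h' => by have := @hm (n + 1 + 1) n (by omega); omega
  have hup : ∀ n, m (n + 1) = m n + 1 := by
    intro n
    refine (hstep n).resolve_right fun hdown => ?_
    -- by injectivity a descent never turns back up, and ℕ admits no infinite descent
    have hdesc : ∀ j, m (n + j) = m (n + j + 1) + 1 := by
      intro j
      induction j with
      | zero => exact hdown
      | succ j ih => exact hdown_persists (n + j) ih
    have hsum : ∀ j, m (n + j) + j = m n := by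
      intro j
      induction j with
      | zero => rfl
      | succ j ih => have := hdesc j; show m (n + j + 1) + (j + 1) = m n; omega
    have := hsum (m n + 1)
    omega
  induction n with
  | zero => rfl
  | succ n ih => rw [hup n, ih, add_assoc]

lemma IsEmb.iterate (hg : IsEmb G g) (k : ℕ) : IsEmb G g^[k] := by
  refine ⟨hg.1.iterate k, fun u w huw => ?_⟩
  induction k with
  | zero => exact huw
  | succ k ih => simpa only [iterate_succ_apply'] using hg.2 _ _ ih

def IsEmb.toHom (hg : IsEmb G g) : G →g G := ⟨g, hg.2 _ _⟩

@[simp]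
lemma IsEmb.coe_toHom (hg : IsEmb G g) : ⇑hg.toHom = g := rfl

lemma elliptic_of_fixesVertex (hg : FixesVertex g) : Elliptic G g := by
  obtain ⟨v, hv⟩ := hg
  refine ⟨{v}, Set.singleton_nonempty v, Set.finite_singleton v, ?_, by simp [hv]⟩
  have : Nonempty ({v} : Set V) := ⟨⟨v, rfl⟩⟩
  exact ⟨fun a b => Subsingleton.elim a b ▸ Reachable.refl a⟩

namespace GRay

variable (R : GRay G)

def segment : (m k : ℕ) → G.Walk (R.f m) (R.f (m + k))
  | _, 0 => Walk.nil
  | m, k + 1 => Walk.cons (R.adj m) ((segment (m + 1) k).copy rfl (congrArg R.f (by omega)))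

lemma support_segment (m k : ℕ) : (R.segment m k).support = (List.range' m (k + 1)).map R.f := by
  induction k generalizing m with
  | zero => simp [segment]
  | succ k ih => rw [List.range'_succ]; simp [segment, ih]

lemma isPath_segment (m k : ℕ) : (R.segment m k).IsPath := by
  rw [Walk.isPath_def, support_segment]
  exact (List.nodup_range').map R.inj

lemma length_segment (m k : ℕ) : (R.segment m k).length = k := by
  induction k generalizing m with
  | zero => rfl
  | succ k ih => simp [segment, ih]

variable {R}

lemma dist_eq (hG : G.IsAcyclic) (m k : ℕ) : G.dist (R.f m) (R.f (m + k)) = k := by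
  rw [← hG.length_eq_dist_of_isPath (R.isPath_segment m k), length_segment]

lemma eq_add_one_or_of_adj (hG : G.IsAcyclic) {a b : ℕ} (h : G.Adj (R.f a) (R.f b)) :
    b = a + 1 ∨ a = b + 1 := by
  wlog hab : a ≤ b generalizing a b
  · exact (this h.symm (by omega)).symm
  obtain ⟨k, rfl⟩ := Nat.exists_eq_add_of_le hab
  have := R.dist_eq hG a k
  rw [dist_eq_one_iff_adj.mpr h] at this
  omega

lemma f_ne_of_dist_lt (hG : G.IsAcyclic) {v : V} {i : ℕ} (h : G.dist (R.f 0) v < i) :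
    R.f i ≠ v := by
  rintro rfl
  have := R.dist_eq hG 0 i
  rw [zero_add] at this
  omega

lemma iterate_f {d : ℕ} (hd : ∀ n, g (R.f n) = R.f (n + d)) (k n : ℕ) :
    g^[k] (R.f n) = R.f (n + k * d) := by
  induction k with
  | zero => simp
  | succ k ih => rw [iterate_succ_apply', ih, hd, add_assoc, ← Nat.succ_mul]

lemma notMem_support_map_iterate (hG : G.IsAcyclic) (hg : IsEmb G g) {d : ℕ} (hd0 : 0 < d)
    (hd : ∀ n, g (R.f n) = R.f (n + d)) {b v : V} (p : G.Walk (R.f 0) b) {k : ℕ}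
    (hk : G.dist (R.f 0) v + p.length < k) : v ∉ (p.map (hg.iterate k).toHom).support := by
  classical
  intro hv
  set q := (p.map (hg.iterate k).toHom).takeUntil v hv
  have hstart : (hg.iterate k).toHom (R.f 0) = R.f (k * d) := by simpa using R.iterate_f hd k 0
  have hq : G.dist v (R.f (k * d)) ≤ p.length :=
    calc G.dist v (R.f (k * d)) = G.dist ((hg.iterate k).toHom (R.f 0)) v := by
          rw [hstart, SimpleGraph.dist_comm]
      _ ≤ q.length := dist_le q
      _ ≤ (p.map (hg.iterate k).toHom).length := Walk.length_takeUntil_le_length _ hv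
      _ = p.length := Walk.length_map _ _
  have htri := (hstart ▸ q.reverse.reachable).dist_triangle_right (R.f 0)
  have hfar := R.dist_eq hG 0 (k * d)
  have hkd : k ≤ k * d := Nat.le_mul_of_pos_right k hd0
  rw [zero_add] at hfar
  omega

end GRay

lemma DirectionRay.exists_shift (hG : G.IsAcyclic) (hg : IsEmb G g) {R : GRay G}
    (hR : DirectionRay G g R) : ∃ d, ∀ n, g (R.f n) = R.f (n + d) := by
  choose m hm using hR
  have hmInj : Injective m := fun a b hab => R.inj (hg.1 (by rw [hm a, hm b, hab]))
  have hstep : ∀ n, m (n + 1) = m n + 1 ∨ m n = m (n + 1) + 1 := fun n =>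
    R.eq_add_one_or_of_adj hG (by rw [← hm, ← hm]; exact hg.2 _ _ (R.adj n))
  exact ⟨m 0, fun n => by rw [hm, Nat.apply_eq_apply_zero_add hmInj hstep, add_comm]⟩

lemma DirectionRay.exists_pos_shift (hG : G.IsAcyclic) (hg : IsEmb G g) (hne : ¬ Elliptic G g)
    {R : GRay G} (hR : DirectionRay G g R) : ∃ d, 0 < d ∧ ∀ n, g (R.f n) = R.f (n + d) := by
  obtain ⟨d, hd⟩ := hR.exists_shift hG hg
  refine ⟨d, Nat.pos_of_ne_zero fun h0 => hne (elliptic_of_fixesVertex ⟨R.f 0, ?_⟩), hd⟩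
  simpa [h0] using hd 0

theorem stmt6 (G : SimpleGraph V) (hT : G.IsTree) (g : V → V) (hg : IsEmb G g)
    (hne : ¬ Elliptic G g) (R1 R2 : GRay G)
    (h1 : DirectionRay G g R1) (h2 : DirectionRay G g R2) : RayEquiv G R1 R2 := by
  obtain ⟨d1, hd1, hR1⟩ := h1.exists_pos_shift hT.isAcyclic hg hne
  obtain ⟨d2, hd2, hR2⟩ := h2.exists_pos_shift hT.isAcyclic hg hne
  intro v
  obtain ⟨p⟩ := hT.connected (R1.f 0) (R2.f 0)
  set k := G.dist (R1.f 0) v + G.dist (R2.f 0) v + p.length + 1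
  have hk1 : k ≤ k * d1 := Nat.le_mul_of_pos_right k hd1
  have hk2 : k ≤ k * d2 := Nat.le_mul_of_pos_right k hd2
  have e1 : (hg.iterate k).toHom (R1.f 0) = R1.f (k * d1) := by
    simpa using R1.iterate_f hR1 k 0
  have e2 : (hg.iterate k).toHom (R2.f 0) = R2.f (k * d2) := by
    simpa using R2.iterate_f hR2 k 0
  refine ⟨k * d1, k * d2, fun i hi => R1.f_ne_of_dist_lt hT.isAcyclic (by omega),
    fun j hj => R2.f_ne_of_dist_lt hT.isAcyclic (by omega),
    (p.map (hg.iterate k).toHom).copy e1 e2, ?_⟩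
  rw [Walk.support_copy]
  exact R1.notMem_support_map_iterate hT.isAcyclic hg hd1 hR1 p (by omega)
end

section
/- For every non-elliptic self-embedding g of a tree T and every vertex v, the sequence (g^i(v)) for i in ℕ converges to the direction g⁺ of g. -/
open SimpleGraph

variable {V : Type*}

/-!
If some vertex `w` were periodic, `g^[k+1] w = w`, then `g^[k+1]` would fix both ends of the
path `q` from `w` to `g w`, hence (paths in a tree being unique) map `q` onto itself; the union
of `q, g q, …, gᵏ q` would then be a finite subtree mapped onto itself by `g`, so `g` would be
elliptic. Hence every orbit `n ↦ gⁿ u` is injective. The orbit of `R.f 0` stays on `R`, so it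
runs off to the end of `R`, and the images `gⁿ p` of a fixed path `p` from `v` to `R.f 0`
eventually avoid any given vertex; they join `gⁿ v` to that tail of `R`.
-/

open Filter

namespace IsEmb

variable {G : SimpleGraph V} {g : V → V}

lemma iterate_s10 (hg : IsEmb G g) (n : ℕ) : IsEmb G g^[n] := by
  induction n with
  | zero => exact ⟨Function.injective_id, fun _ _ h => h⟩
  | succ n ih =>
    rw [Function.iterate_succ']
    exact ⟨hg.1.comp ih.1, fun u v h => hg.2 _ _ (ih.2 _ _ h)⟩

-- An `abbrev`, so that the endpoints `hg.toHom u` of mapped walks unfold to `g u` when rewriting.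
abbrev toHom_s10 (hg : IsEmb G g) : G →g G := ⟨g, hg.2 _ _⟩

/-- The walk `q ++ g q ++ ⋯ ++ gⁿ q` from `w` to `gⁿ⁺¹ w`. -/
def orbitWalk (hg : IsEmb G g) {w : V} (q : G.Walk w (g w)) : (n : ℕ) → G.Walk w (g^[n + 1] w)
  | 0 => q
  | n + 1 => (hg.orbitWalk q n).append
      ((q.map (hg.iterate_s10 (n + 1)).toHom_s10).copy rfl (Function.iterate_succ_apply g _ w).symm)

lemma mem_support_orbitWalk (hg : IsEmb G g) {w u : V} (q : G.Walk w (g w)) (n : ℕ) :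
    u ∈ (hg.orbitWalk q n).support ↔ ∃ i ≤ n, ∃ t ∈ q.support, g^[i] t = u := by
  induction n with
  | zero => simp [orbitWalk]
  | succ n ih =>
    rw [orbitWalk, Walk.mem_support_append_iff, ih, Walk.support_copy, Walk.support_map,
      List.mem_map]
    constructor
    · rintro (⟨i, hi, ht⟩ | ht)
      · exact ⟨i, by omega, ht⟩
      · exact ⟨n + 1, le_rfl, ht⟩
    · rintro ⟨i, hi, ht⟩
      rcases Nat.lt_or_eq_of_le hi with hi | rfl
      · exact .inl ⟨i, by omega, ht⟩
      · exact .inr ht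

end IsEmb

lemma SimpleGraph.IsAcyclic.map_support_eq {G : SimpleGraph V} (hG : G.IsAcyclic) {φ : V → V}
    (hφ : IsEmb G φ) {u v : V} (p : G.Path u v) (hu : φ u = u) (hv : φ v = v) :
    p.1.support.map φ = p.1.support := by
  have himage : ((p.1.map hφ.toHom_s10).copy hu hv).IsPath :=
    (Walk.isPath_copy _ _ _).2 (Walk.IsPath.map (f := hφ.toHom_s10) hφ.1 p.2)
  have := congrArg (fun q : G.Path u v => q.1.support)
    ((hG.subsingleton_path u v).elim ⟨_, himage⟩ p)
  dsimp only at this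
  rwa [Walk.support_copy, Walk.support_map] at this

lemma Function.Injective.eventually_ne_atTop {α : Type*} {u : ℕ → α} (hu : Function.Injective u)
    (x : α) : ∀ᶠ n in atTop, u n ≠ x :=
  Nat.cofinite_eq_atTop ▸ hu.tendsto_cofinite.eventually (eventually_cofinite_ne x)

lemma DirectionRay.exists_iterate_eq {G : SimpleGraph V} {g : V → V} {R : GRay G}
    (hR : DirectionRay G g R) (n i : ℕ) : ∃ m, g^[n] (R.f i) = R.f m := by
  induction n generalizing i with
  | zero => exact ⟨i, rfl⟩
  | succ n ih =>
    obtain ⟨j, hj⟩ := hR i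
    rw [Function.iterate_succ_apply, hj]
    exact ih j

lemma convergesTo_of_walks {G : SimpleGraph V} {x : ℕ → V} (R : GRay G) {a : ℕ → ℕ}
    (ha : Tendsto a atTop atTop) (p : ∀ n, G.Walk (x n) (R.f (a n)))
    (hp : ∀ v, ∀ᶠ n in atTop, v ∉ (p n).support) : ConvergesTo G x R := by
  intro v
  obtain ⟨m, hm⟩ := eventually_atTop.1 (R.inj.eventually_ne_atTop v)
  obtain ⟨N, hN⟩ := eventually_atTop.1 ((ha.eventually (eventually_ge_atTop m)).and (hp v))
  exact ⟨N, fun n hn => ⟨a n, fun i hi => hm i ((hN n hn).1.trans hi), p n, (hN n hn).2⟩⟩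

section

variable {G : SimpleGraph V} {g : V → V}

lemma elliptic_of_iterate_eq (hT : G.IsTree) (hg : IsEmb G g) {w : V} {k : ℕ}
    (hw : g^[k + 1] w = w) : Elliptic G g := by
  classical
  obtain ⟨q⟩ : Nonempty (G.Path w (g w)) := ⟨(hT.connected w (g w)).some.toPath⟩
  have hgw : g^[k + 1] (g w) = g w := by
    rw [← Function.iterate_succ_apply, Function.iterate_succ_apply', hw]
  have hq : ∀ t ∈ q.1.support, g^[k + 1] t ∈ q.1.support := fun t ht => by
    rw [← hT.isAcyclic.map_support_eq (hg.iterate_s10 (k + 1)) q hw hgw]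
    exact List.mem_map_of_mem ht
  set W := hg.orbitWalk q.1 k
  have hfin : W.toSubgraph.verts.Finite := W.verts_toSubgraph ▸ W.support.finite_toSet
  have hmaps : Set.MapsTo g W.toSubgraph.verts W.toSubgraph.verts := by
    intro u hu
    rw [Walk.mem_verts_toSubgraph, IsEmb.mem_support_orbitWalk] at hu ⊢
    obtain ⟨i, hi, t, ht, rfl⟩ := hu
    rcases hi.lt_or_eq with hi | rfl
    · exact ⟨i + 1, hi, t, ht, Function.iterate_succ_apply' g i t⟩
    · exact ⟨0, Nat.zero_le _, _, hq t ht, Function.iterate_succ_apply' g i t⟩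
  exact ⟨W.toSubgraph.verts, ⟨w, W.start_mem_verts_toSubgraph⟩, hfin,
    W.toSubgraph_connected.induce_verts,
    ((hfin.injOn_iff_bijOn_of_mapsTo hmaps).1 hg.1.injOn).image_eq⟩

lemma injective_iterate_apply_of_not_elliptic (hT : G.IsTree) (hg : IsEmb G g)
    (hne : ¬ Elliptic G g) (u : V) : Function.Injective fun n => g^[n] u := by
  intro i j hij
  by_contra hij'
  wlog hlt : i < j generalizing i j
  · exact this hij.symm (Ne.symm hij') (by omega)
  have hper : g^[j - i - 1 + 1] u = u := (hg.iterate_s10 i).1 <| by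
    rw [← Function.iterate_add_apply, show i + (j - i - 1 + 1) = j by omega]
    exact hij.symm
  exact hne (elliptic_of_iterate_eq hT hg hper)

end

theorem stmt10 (G : SimpleGraph V) (hT : G.IsTree) (g : V → V) (hg : IsEmb G g)
    (hne : ¬ Elliptic G g) (R : GRay G) (hR : DirectionRay G g R) (v : V) :
    ConvergesTo G (fun i => g^[i] v) R := by
  have horbit := injective_iterate_apply_of_not_elliptic hT hg hne
  choose a ha using fun n => hR.exists_iterate_eq n 0
  have ha_inj : Function.Injective a := fun i j hij => horbit (R.f 0) <| by
    simp only [ha, hij]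
  obtain ⟨p⟩ := hT.connected v (R.f 0)
  refine convergesTo_of_walks R ha_inj.nat_tendsto_atTop
    (fun n => (p.map (hg.iterate_s10 n).toHom_s10).copy rfl (ha n)) fun x => ?_
  have hfar : ∀ t ∈ {t | t ∈ p.support}, ∀ᶠ n in atTop, g^[n] t ≠ x :=
    fun t _ => (horbit t).eventually_ne_atTop x
  filter_upwards [(eventually_all_finite p.support.finite_toSet).2 hfar] with n hn
  rw [Walk.support_copy, Walk.support_map, List.mem_map]
  rintro ⟨t, ht, htx⟩
  exact hn t ht htx
end
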